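/- arXiv:1104.0454 — 8 statements merged into one kernel-verified Lean document; each statement's English description precedes it below -/
import Mathlib

section
/- Let G be an undirected graph on n nodes with self-loops at every node, A its equal-neighbor update matrix (A_{ij} = 1/d_i if j ∈ N_i(G), else 0), and D = diag(d_1,...,d_n). Then A^T D A = D − Σ_{i<j} w_{ij} (e_i − e_j)(e_i − e_j)^T, where w_{ij} is the (i,j)-th entry of A^T D A, i.e., w_{ij} = Σ_{k ∈ N_i ∩ N_j} 1/d_k, and e_i denotes the i-th standard basis vector. -/
open Matrix
/-- Decomposition `Aᵀ D A = D - Σ_{i<j} w_{ij} (e_i - e_j)(e_i - e_j)ᵀ`,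
where `w_{ij}` is the `(i,j)` entry of `Aᵀ D A`, equal to `Σ_{k ∈ N_i ∩ N_j} 1/d_k`. -/
theorem update_matrix_decomposition
    (n : ℕ) (N : Fin n → Finset (Fin n))
    (hsym : ∀ i j, j ∈ N i ↔ i ∈ N j)
    (hself : ∀ i, i ∈ N i)
    (A D : Matrix (Fin n) (Fin n) ℝ)
    (hA : ∀ i j, A i j = if j ∈ N i then ((N i).card : ℝ)⁻¹ else 0)
    (hD : D = Matrix.diagonal fun i => ((N i).card : ℝ)) :
    (∀ i j, (Aᵀ * D * A) i j = ∑ k ∈ N i ∩ N j, ((N k).card : ℝ)⁻¹) ∧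
    Aᵀ * D * A =
      D - ∑ p ∈ Finset.univ.filter (fun p : Fin n × Fin n => p.1 < p.2),
        (Aᵀ * D * A) p.1 p.2 •
          Matrix.vecMulVec (Pi.single p.1 1 - Pi.single p.2 1)
            (Pi.single p.1 1 - Pi.single p.2 1) := by
  have hcard : ∀ k, ((N k).card : ℝ) ≠ 0 := by
    intro k
    have : 0 < (N k).card := Finset.card_pos.mpr ⟨k, hself k⟩
    positivity
  -- entry formula
  have hM : ∀ i j, (Aᵀ * D * A) i j = ∑ k ∈ N i ∩ N j, ((N k).card : ℝ)⁻¹ := by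
    intro i j
    have h1 : (Aᵀ * D * A) i j = ∑ k, A k i * ((N k).card : ℝ) * A k j := by
      rw [hD, Matrix.mul_apply]
      refine Finset.sum_congr rfl fun k _ => ?_
      rw [Matrix.mul_diagonal, Matrix.transpose_apply]
    rw [h1]
    calc ∑ k, A k i * ((N k).card : ℝ) * A k j
        = ∑ k, (if k ∈ N i ∩ N j then ((N k).card : ℝ)⁻¹ else 0) := by
          refine Finset.sum_congr rfl fun k _ => ?_
          by_cases h1 : i ∈ N k <;> by_cases h2 : j ∈ N k <;>
            simp [hA, Finset.mem_inter, hsym i k, hsym j k, h1, h2,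
              inv_mul_cancel₀ (hcard k)]
      _ = ∑ k ∈ N i ∩ N j, ((N k).card : ℝ)⁻¹ := by
          rw [Finset.sum_ite_mem, Finset.univ_inter]
  -- symmetry
  have hsymM : ∀ i j, (Aᵀ * D * A) i j = (Aᵀ * D * A) j i := by
    intro i j; rw [hM, hM, Finset.inter_comm]
  -- row sums
  have hrow : ∀ i, ∑ j, (Aᵀ * D * A) i j = ((N i).card : ℝ) := by
    intro i
    calc ∑ j, (Aᵀ * D * A) i j
        = ∑ j, ∑ k, (if k ∈ N i then (if j ∈ N k then ((N k).card : ℝ)⁻¹ else 0) else 0) := by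
          refine Finset.sum_congr rfl fun j _ => ?_
          rw [hM, ← Finset.univ_inter (N i ∩ N j), ← Finset.sum_ite_mem]
          refine Finset.sum_congr rfl fun k _ => ?_
          by_cases h1 : k ∈ N i <;> by_cases h2 : k ∈ N j <;>
            simp [Finset.mem_inter, h1, h2, ← hsym j k]
      _ = ∑ k, ∑ j, (if k ∈ N i then (if j ∈ N k then ((N k).card : ℝ)⁻¹ else 0) else 0) :=
          Finset.sum_comm
      _ = ∑ k, (if k ∈ N i then (1:ℝ) else 0) := by
          refine Finset.sum_congr rfl fun k _ => ?_
          by_cases h : k ∈ N i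
          · simp only [h, if_true]
            rw [Finset.sum_ite_mem, Finset.univ_inter, Finset.sum_const, nsmul_eq_mul,
              mul_inv_cancel₀ (hcard k)]
          · simp [h]
      _ = ((N i).card : ℝ) := by
          rw [Finset.sum_ite_mem, Finset.univ_inter, Finset.sum_const, nsmul_eq_mul, mul_one]
  refine ⟨hM, ?_⟩
  ext i j
  have hDij : D i j = if i = j then ((N i).card : ℝ) else 0 := by
    rw [hD]; by_cases h : i = j <;> simp [Matrix.diagonal_apply, h]
  rw [Matrix.sub_apply, Matrix.sum_apply]
  simp only [Matrix.smul_apply, Matrix.vecMulVec_apply, Pi.sub_apply, Pi.single_apply,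
    smul_eq_mul]
  rcases lt_trichotomy i j with hij | hij | hij
  · -- i < j
    rw [Finset.sum_eq_single_of_mem (⟨i, j⟩ : Fin n × Fin n)
      (by simp [Finset.mem_filter, hij])
      (by
        rintro ⟨a, b⟩ hp hne
        simp only [Finset.mem_filter, Finset.mem_univ, true_and] at hp
        by_cases h1 : i = a <;> by_cases h2 : i = b <;> by_cases h3 : j = a <;>
          by_cases h4 : j = b
        all_goals first
          | omega
          | exact absurd (Prod.ext_iff.mpr ⟨h1.symm, h4.symm⟩) hne
          | simp [h1, h2, h3, h4])]
    simp only [hDij]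
    simp [hij.ne, hij.ne']
  · -- i = j
    subst hij
    rw [hDij, if_pos rfl]
    have key : ∑ p ∈ Finset.univ.filter (fun p : Fin n × Fin n => p.1 < p.2),
        (Aᵀ * D * A) p.1 p.2 *
          (((if i = p.1 then (1:ℝ) else 0) - (if i = p.2 then 1 else 0)) *
           ((if i = p.1 then (1:ℝ) else 0) - (if i = p.2 then 1 else 0)))
        = ((N i).card : ℝ) - (Aᵀ * D * A) i i := by
      rw [Finset.sum_filter, Fintype.sum_prod_type]
      have step : ∀ a b : Fin n,
          (if a < b then (Aᵀ * D * A) a b *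
            (((if i = a then (1:ℝ) else 0) - (if i = b then 1 else 0)) *
             ((if i = a then (1:ℝ) else 0) - (if i = b then 1 else 0))) else 0)
          = (if a = i then (if a < b then (Aᵀ * D * A) a b else 0) else 0)
            + (if b = i then (if a < b then (Aᵀ * D * A) a b else 0) else 0) := by
        intro a b
        by_cases hlt : a < b
        · by_cases h1 : i = a <;> by_cases h2 : i = b
          · omega
          · subst h1
            simp only [if_pos rfl, if_pos hlt, if_neg h2, if_neg (Ne.symm h2)]
            norm_num
          · subst h2
            simp only [if_pos rfl, if_pos hlt, if_neg h1, if_neg (Ne.symm h1)]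
            norm_num
          · simp only [if_pos hlt, if_neg h1, if_neg h2, if_neg (Ne.symm h1),
              if_neg (Ne.symm h2)]
            ring
        · simp [hlt]
      simp only [step]
      simp only [Finset.sum_add_distrib]
      have e1 : ∑ a, ∑ b, (if a = i then (if a < b then (Aᵀ * D * A) a b else 0) else 0)
          = ∑ b, (if i < b then (Aᵀ * D * A) i b else 0) := by
        have h' : ∀ a : Fin n, ∑ b, (if a = i then (if a < b then (Aᵀ * D * A) a b else 0) else 0)
            = (if a = i then ∑ b, (if a < b then (Aᵀ * D * A) a b else 0) else 0) := by
          intro a; by_cases h : a = i <;> simp [h]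
        simp only [h']
        rw [Finset.sum_ite_eq' Finset.univ i]
        simp
      have e2 : ∑ a, ∑ b, (if b = i then (if a < b then (Aᵀ * D * A) a b else 0) else 0)
          = ∑ a, (if a < i then (Aᵀ * D * A) i a else 0) := by
        refine Finset.sum_congr rfl fun a _ => ?_
        rw [Finset.sum_ite_eq' Finset.univ i]
        simp only [Finset.mem_univ, if_true]
        by_cases h : a < i
        · rw [if_pos h, if_pos h, hsymM a i]
        · rw [if_neg h, if_neg h]
      rw [e1, e2, ← Finset.sum_add_distrib]
      have e3 : ∀ b : Fin n,
          (if i < b then (Aᵀ * D * A) i b else 0) + (if b < i then (Aᵀ * D * A) i b else 0)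
          = (Aᵀ * D * A) i b - (if b = i then (Aᵀ * D * A) i b else 0) := by
        intro b
        rcases lt_trichotomy i b with h | h | h
        · rw [if_pos h, if_neg (by omega), if_neg (by omega)]; ring
        · rw [if_neg (by omega), if_neg (by omega), if_pos (by omega)]; ring
        · rw [if_neg (by omega), if_pos h, if_neg (by omega)]; ring
      simp only [e3]
      rw [Finset.sum_sub_distrib, hrow, Finset.sum_ite_eq' Finset.univ i]
      simp
    rw [key]
    ring
  · -- j < i
    rw [Finset.sum_eq_single_of_mem (⟨j, i⟩ : Fin n × Fin n)
      (by simp [Finset.mem_filter, hij])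
      (by
        rintro ⟨a, b⟩ hp hne
        simp only [Finset.mem_filter, Finset.mem_univ, true_and] at hp
        by_cases h1 : i = a <;> by_cases h2 : i = b <;> by_cases h3 : j = a <;>
          by_cases h4 : j = b
        all_goals first
          | omega
          | exact absurd (Prod.ext_iff.mpr ⟨h3.symm, h2.symm⟩) hne
          | simp [h1, h2, h3, h4])]
    simp only [hDij]
    rw [hsymM i j]
    simp [hij.ne, hij.ne']
end

section
/- Let G be an undirected graph on n nodes with self-loops at every node and A its equal-neighbor update matrix. Then for every vector x ∈ R^n, V(Ax) = V(x) − Σ_{i<j} (x_i − x_j)^2 · Σ_{k ∈ N_i ∩ N_j} 1/d_k, where V(y) = Σ_i d_i y_i^2 = y^T D y. -/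
/-!
Row `i` of `A` averages `x` over `N i`, so `dᵢ (Ax)ᵢ² = Sᵢ² / dᵢ` with `Sᵢ = ∑_{j ∈ N i} xⱼ`, and
Lagrange's identity `d ∑ xⱼ² - S² = ½ ∑_{a,b ∈ N i} (xₐ - x_b)²` turns this into
`∑_{j ∈ N i} xⱼ² - (2 dᵢ)⁻¹ ∑_{a,b ∈ N i} (xₐ - x_b)²`. Summing over `i`, symmetry of the
neighbourhoods turns the first term into `V x` and regroups the second by pairs `(a, b)`, which lie
together in `N k` exactly when `k ∈ N a ∩ N b`.
-/

open Finset Matrix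

namespace Finset

variable {ι : Type*}

theorem sum_sum_sub_sq {R : Type*} [CommRing R] (s : Finset ι) (f : ι → R) :
    ∑ a ∈ s, ∑ b ∈ s, (f a - f b) ^ 2 =
      2 * (#s * ∑ a ∈ s, f a ^ 2 - (∑ a ∈ s, f a) ^ 2) := by
  simp only [sub_sq, sum_add_distrib, sum_sub_distrib, sum_const, nsmul_eq_mul, mul_assoc,
    ← mul_sum, ← sum_mul]
  ring

theorem card_mul_sq_mean {K : Type*} [Field K] [CharZero K] (s : Finset ι) (f : ι → K) :
    #s * ((#s : K)⁻¹ * ∑ a ∈ s, f a) ^ 2 =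
      ∑ a ∈ s, f a ^ 2 - (#s : K)⁻¹ / 2 * ∑ a ∈ s, ∑ b ∈ s, (f a - f b) ^ 2 := by
  rcases s.eq_empty_or_nonempty with rfl | hs
  · simp
  have hcard : (#s : K) ≠ 0 := by exact_mod_cast hs.card_ne_zero
  rw [sum_sum_sub_sq]
  field_simp
  ring

theorem sum_sum_eq_two_nsmul_sum_lt {M : Type*} [Fintype ι] [LinearOrder ι] [AddCommMonoid M]
    (c : ι → ι → M) (hc : ∀ a b, c a b = c b a) (hdiag : ∀ a, c a a = 0) :
    ∑ a, ∑ b, c a b = 2 • ∑ p ∈ univ.filter (fun p : ι × ι => p.1 < p.2), c p.1 p.2 := by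
  have hswap : ∑ p ∈ univ.filter (fun p : ι × ι => p.2 < p.1), c p.1 p.2 =
      ∑ p ∈ univ.filter (fun p : ι × ι => p.1 < p.2), c p.1 p.2 :=
    sum_equiv (Equiv.prodComm ι ι) (by simp) (fun p _ => hc p.1 p.2)
  have hge : ∑ p ∈ univ.filter (fun p : ι × ι => ¬ p.1 < p.2), c p.1 p.2 =
      ∑ p ∈ univ.filter (fun p : ι × ι => p.2 < p.1), c p.1 p.2 := by
    rw [← sum_filter_of_ne (p := fun p : ι × ι => p.2 < p.1), filter_filter]
    · exact sum_congr (filter_congr fun p _ => ⟨And.right, fun h => ⟨h.not_gt, h⟩⟩) fun _ _ => rfl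
    · intro p hp hne
      simp only [mem_filter, mem_univ, true_and, not_lt] at hp
      refine hp.lt_of_ne fun heq => hne ?_
      rw [heq]; exact hdiag _
  rw [← Fintype.sum_prod_type', ← sum_filter_add_sum_filter_not _ (fun p : ι × ι => p.1 < p.2),
    hge, hswap, two_nsmul]

end Finset

section EqualNeighbor

variable {ι K : Type*} [Fintype ι] {N : ι → Finset ι}

theorem sum_sum_neighbors {M : Type*} [AddCommMonoid M] (hsym : ∀ i j, j ∈ N i ↔ i ∈ N j)
    (f : ι → M) : ∑ i, ∑ j ∈ N i, f j = ∑ j, #(N j) • f j := by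
  rw [sum_comm' (t' := univ) (s' := N) (by simp [hsym])]
  simp

variable [DecidableEq ι]

theorem sum_sum_sum_neighbors {M : Type*} [AddCommMonoid M] (hsym : ∀ i j, j ∈ N i ↔ i ∈ N j)
    (f : ι → ι → ι → M) :
    ∑ k, ∑ a ∈ N k, ∑ b ∈ N k, f k a b = ∑ a, ∑ b, ∑ k ∈ N a ∩ N b, f k a b := by
  rw [sum_comm' (t' := univ) (s' := N) (by simp [hsym])]
  exact sum_congr rfl fun a _ => sum_comm' (by simp [hsym, and_comm])

variable [Field K]

variable (K N) in
def equalNeighborMatrix : Matrix ι ι K :=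
  fun i j => if j ∈ N i then (#(N i) : K)⁻¹ else 0

theorem equalNeighborMatrix_mulVec (x : ι → K) (i : ι) :
    (equalNeighborMatrix K N *ᵥ x) i = (#(N i) : K)⁻¹ * ∑ j ∈ N i, x j := by
  simp [equalNeighborMatrix, Matrix.mulVec, dotProduct, ite_mul, sum_ite_mem, mul_sum]

theorem sum_card_mul_equalNeighborMatrix_mulVec_sq [CharZero K]
    (hsym : ∀ i j, j ∈ N i ↔ i ∈ N j) (x : ι → K) :
    ∑ i, (#(N i) : K) * (equalNeighborMatrix K N *ᵥ x) i ^ 2 =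
      ∑ i, #(N i) * x i ^ 2 -
        2⁻¹ * ∑ a, ∑ b, (x a - x b) ^ 2 * ∑ k ∈ N a ∩ N b, (#(N k) : K)⁻¹ := by
  simp only [equalNeighborMatrix_mulVec, card_mul_sq_mean, sum_sub_distrib]
  simp only [sum_sum_neighbors hsym, nsmul_eq_mul, mul_sum]
  rw [sum_sum_sum_neighbors hsym]
  exact congrArg _ (sum_congr rfl fun a _ => sum_congr rfl fun b _ =>
    sum_congr rfl fun k _ => by ring)

end EqualNeighbor

theorem lyapunov_exact_decrease_general
    (n : ℕ) (N : Fin n → Finset (Fin n))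
    (hsym : ∀ i j, j ∈ N i ↔ i ∈ N j)
    (A : Matrix (Fin n) (Fin n) ℝ)
    (hA : ∀ i j, A i j = if j ∈ N i then ((N i).card : ℝ)⁻¹ else 0)
    (x : Fin n → ℝ) :
    ∑ i, ((N i).card : ℝ) * (A.mulVec x i) ^ 2 =
      ∑ i, ((N i).card : ℝ) * (x i) ^ 2 -
        ∑ p ∈ Finset.univ.filter (fun p : Fin n × Fin n => p.1 < p.2),
          (x p.1 - x p.2) ^ 2 * ∑ k ∈ N p.1 ∩ N p.2, ((N k).card : ℝ)⁻¹ := by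
  obtain rfl : A = equalNeighborMatrix ℝ N := Matrix.ext hA
  rw [sum_card_mul_equalNeighborMatrix_mulVec_sq hsym, sum_sum_eq_two_nsmul_sum_lt]
  · rw [two_nsmul, ← two_mul, inv_mul_cancel_left₀ two_ne_zero]
  · intro a b
    rw [inter_comm, ← neg_sub, neg_sq]
  · simp

/-- For the equal-neighbor update matrix `A` of an undirected graph with
self-loops, `V(Ax) = V(x) - Σ_{i<j} (x_i - x_j)² Σ_{k ∈ N_i ∩ N_j} 1/d_k`,
where `V(y) = Σ_i d_i y_i²`. -/
theorem lyapunov_exact_decrease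
    (n : ℕ) (N : Fin n → Finset (Fin n))
    (hsym : ∀ i j, j ∈ N i ↔ i ∈ N j)
    (hself : ∀ i, i ∈ N i)
    (A : Matrix (Fin n) (Fin n) ℝ)
    (hA : ∀ i j, A i j = if j ∈ N i then ((N i).card : ℝ)⁻¹ else 0)
    (x : Fin n → ℝ) :
    ∑ i, ((N i).card : ℝ) * (A.mulVec x i) ^ 2 =
      ∑ i, ((N i).card : ℝ) * (x i) ^ 2 -
        ∑ p ∈ Finset.univ.filter (fun p : Fin n × Fin n => p.1 < p.2),
          (x p.1 - x p.2) ^ 2 * ∑ k ∈ N p.1 ∩ N p.2, ((N k).card : ℝ)⁻¹ :=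
  lyapunov_exact_decrease_general n N hsym A hA x
end

section
/- Let G be a connected undirected graph on n nodes with self-loops at every node and A its equal-neighbor update matrix. Fix x ∈ R^n and let i[1],...,i[n] be a permutation sorting the entries of x in nondecreasing order: x_{i[1]} ≤ x_{i[2]} ≤ ... ≤ x_{i[n]}. Then V(Ax) ≤ V(x) − (1/2) Σ_{l=1}^{n−1} (x_{i[l+1]} − x_{i[l]})^2, where V(y) = Σ_i d_i y_i^2. -/
/-
With `d i = #(N i)`, `(A x) i` is the mean `m` of `x` over `N i`. The variance identity
`d m ^ 2 = ∑_{j ∈ N i} x_j ^ 2 - (2 d)⁻¹ ∑_{j,k ∈ N i} (x_j - x_k) ^ 2` and the symmetry of `N`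
give exactly `V(A x) = V(x) - (1/2) ∑_i d_i⁻¹ ∑_{j,k ∈ N i} (x_j - x_k) ^ 2`, so it remains to
bound the squared gaps `g_l = x_{σ(l+1)} - x_{σ l}` of the sorted vector by the last sum.
A pair `j, k` pays for every gap it straddles: those gaps telescope to `|x_j - x_k|`, and the
sum of their squares is at most the square of their sum. By connectivity, for every cut of the
sorted order some `N u` meets both sides, in `a, b ≥ 1` nodes; its `2ab ≥ a + b = d_u`
separated ordered pairs pay `g_l ^ 2` at least once against the weight `d_u⁻¹`.
-/

open Finset Matrix

theorem Relation.ReflTransGen.exists_rel_of_not {α : Type*} {r : α → α → Prop} {P : α → Prop}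
    {a b : α} (h : Relation.ReflTransGen r a b) (ha : P a) (hb : ¬ P b) :
    ∃ u v, r u v ∧ P u ∧ ¬ P v := by
  induction h with
  | refl => exact absurd ha hb
  | @tail c _ _ hcb ih =>
    by_cases hc : P c
    · exact ⟨c, _, hcb, hc, hb⟩
    · exact ih hc

theorem Finset.card_mul_sq_mean_s3 {ι : Type*} (s : Finset ι) (x : ι → ℝ) :
    (#s : ℝ) * ((#s : ℝ)⁻¹ * ∑ j ∈ s, x j) ^ 2 =
      ∑ j ∈ s, x j ^ 2 - 1 / 2 * ((#s : ℝ)⁻¹ * ∑ q ∈ s ×ˢ s, (x q.1 - x q.2) ^ 2) := by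
  have hexpand : ∑ q ∈ s ×ˢ s, (x q.1 - x q.2) ^ 2 =
      2 * (#s * ∑ j ∈ s, x j ^ 2 - (∑ j ∈ s, x j) ^ 2) := by
    simp only [sum_product, sub_sq, sum_add_distrib, sum_sub_distrib, sum_const, nsmul_eq_mul,
      ← mul_sum, ← sum_mul]
    ring
  rcases eq_or_ne (#s : ℝ) 0 with hs | hs
  · simp [card_eq_zero.mp (by exact_mod_cast hs)]
  · rw [hexpand]
    field_simp
    ring

theorem Finset.sum_sum_eq_sum_card_nsmul_of_symm {ι M : Type*} [Fintype ι] [AddCommMonoid M]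
    (N : ι → Finset ι) (hsym : ∀ i j, j ∈ N i ↔ i ∈ N j) (f : ι → M) :
    ∑ i, ∑ j ∈ N i, f j = ∑ j, #(N j) • f j := by
  rw [sum_comm' (t' := univ) (s' := N) fun i j => by simp [hsym i j]]
  simp only [sum_const]

theorem Finset.card_le_card_filter_xor {α : Type*} (s : Finset α) (p : α → Prop)
    [DecidablePred p] (hp : ∃ u ∈ s, p u) (hnp : ∃ v ∈ s, ¬ p v) :
    #s ≤ #{q ∈ s ×ˢ s | Xor (p q.1) (p q.2)} := by
  classical
  have hsplit : {q ∈ s ×ˢ s | Xor (p q.1) (p q.2)} =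
      {j ∈ s | p j} ×ˢ {k ∈ s | ¬ p k} ∪ {j ∈ s | ¬ p j} ×ˢ {k ∈ s | p k} := by
    ext ⟨j, k⟩
    simp only [mem_filter, mem_product, mem_union]
    unfold Xor
    tauto
  have hdisj : Disjoint ({j ∈ s | p j} ×ˢ {k ∈ s | ¬ p k}) ({j ∈ s | ¬ p j} ×ˢ {k ∈ s | p k}) :=
    disjoint_product.mpr (Or.inl (disjoint_filter_filter_not s s p))
  obtain ⟨u, hu, hpu⟩ := hp
  obtain ⟨v, hv, hpv⟩ := hnp
  have ha : 1 ≤ #{j ∈ s | p j} := card_pos.mpr ⟨u, mem_filter.mpr ⟨hu, hpu⟩⟩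
  have hb : 1 ≤ #{j ∈ s | ¬ p j} := card_pos.mpr ⟨v, mem_filter.mpr ⟨hv, hpv⟩⟩
  rw [hsplit, card_union_of_disjoint hdisj, card_product, card_product,
    ← card_filter_add_card_filter_not (s := s) p]
  nlinarith

theorem le_sum_inv_card_mul_sum_xor {ι : Type*} [Fintype ι] (N : ι → Finset ι)
    (hself : ∀ i, i ∈ N i) (hconn : ∀ i j, Relation.ReflTransGen (fun a b => b ∈ N a) i j)
    (p : ι → Prop) [DecidablePred p] {a b : ι} (ha : p a) (hb : ¬ p b) {w : ℝ} (hw : 0 ≤ w) :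
    w ≤ ∑ i, (#(N i) : ℝ)⁻¹ * ∑ q ∈ N i ×ˢ N i, if Xor (p q.1) (p q.2) then w else 0 := by
  simp only [← sum_filter, sum_const, nsmul_eq_mul]
  obtain ⟨u, v, huv, hu, hv⟩ := (hconn a b).exists_rel_of_not ha hb
  have hcount := card_le_card_filter_xor (N u) p ⟨u, hself u, hu⟩ ⟨v, huv, hv⟩
  have hpos : (0 : ℝ) < #(N u) := by exact_mod_cast card_pos.mpr ⟨u, hself u⟩
  calc w ≤ (#(N u) : ℝ)⁻¹ * (#{q ∈ N u ×ˢ N u | Xor (p q.1) (p q.2)} * w) := by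
        rw [le_inv_mul_iff₀ hpos]
        exact mul_le_mul_of_nonneg_right (by exact_mod_cast hcount) hw
    _ ≤ _ := single_le_sum
          (f := fun i => (#(N i) : ℝ)⁻¹ * (#{q ∈ N i ×ˢ N i | Xor (p q.1) (p q.2)} * w))
          (fun i _ => by positivity) (mem_univ u)

theorem Fin.sum_filter_succ_sub_castSucc {M : Type*} [AddCommGroup M] {n : ℕ}
    (y : Fin (n + 1) → M) {a b : Fin (n + 1)} (hab : a ≤ b) :
    ∑ l : Fin n with a ≤ l.castSucc ∧ l.castSucc < b, (y l.succ - y l.castSucc) = y b - y a := by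
  set f : ℕ → M := fun m => y (Fin.clamp m n)
  have hf : ∀ i : Fin (n + 1), y i = f i := fun i =>
    congrArg y (Fin.ext (by simp [Fin.clamp]; omega))
  calc ∑ l : Fin n with a ≤ l.castSucc ∧ l.castSucc < b, (y l.succ - y l.castSucc)
      = ∑ l : Fin n, if (a : ℕ) ≤ l ∧ (l : ℕ) < b then f (l + 1) - f l else 0 := by
        rw [sum_filter]
        refine sum_congr rfl fun l _ => ?_
        rw [hf l.succ, hf l.castSucc]
        simp [Fin.le_def, Fin.lt_def]
    _ = ∑ m ∈ range n with (a : ℕ) ≤ m ∧ m < b, (f (m + 1) - f m) := by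
        rw [Fin.sum_univ_eq_sum_range (fun m => if (a : ℕ) ≤ m ∧ m < b then f (m + 1) - f m else 0),
          sum_filter]
    _ = ∑ m ∈ Ico (a : ℕ) b, (f (m + 1) - f m) := by
        congr 1
        ext m
        simp only [mem_filter, mem_range, mem_Ico]
        omega
    _ = y b - y a := by rw [sum_Ico_sub _ hab, hf, hf]

theorem Monotone.sum_sq_sub_xor_le {n : ℕ} {y : Fin (n + 1) → ℝ} (hy : Monotone y)
    (a b : Fin (n + 1)) :
    ∑ l : Fin n,
        (if Xor (a ≤ l.castSucc) (b ≤ l.castSucc) then (y l.succ - y l.castSucc) ^ 2 else 0)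
      ≤ (y a - y b) ^ 2 := by
  wlog hab : a ≤ b generalizing a b
  · simpa only [xor_comm, sub_sq_comm] using this b a (le_of_not_ge hab)
  have hsep : ∀ l : Fin n,
      Xor (a ≤ l.castSucc) (b ≤ l.castSucc) ↔ a ≤ l.castSucc ∧ l.castSucc < b := by
    intro l
    simp only [Xor, not_le, Fin.le_def, Fin.lt_def]
    omega
  simp only [hsep, ← sum_filter]
  calc _ ≤ (∑ l : Fin n with a ≤ l.castSucc ∧ l.castSucc < b, (y l.succ - y l.castSucc)) ^ 2 :=
        sum_sq_le_sq_sum_of_nonneg fun l _ => sub_nonneg.2 (hy l.castSucc_le_succ)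
    _ = (y a - y b) ^ 2 := by rw [Fin.sum_filter_succ_sub_castSucc y hab]; ring

theorem sum_card_mul_sq_mulVec_eq {ι : Type*} [Fintype ι] [DecidableEq ι] (N : ι → Finset ι)
    (hsym : ∀ i j, j ∈ N i ↔ i ∈ N j) (A : Matrix ι ι ℝ)
    (hA : ∀ i j, A i j = if j ∈ N i then (#(N i) : ℝ)⁻¹ else 0) (x : ι → ℝ) :
    ∑ i, (#(N i) : ℝ) * (A *ᵥ x) i ^ 2 = ∑ i, (#(N i) : ℝ) * x i ^ 2 -
      1 / 2 * ∑ i, (#(N i) : ℝ)⁻¹ * ∑ q ∈ N i ×ˢ N i, (x q.1 - x q.2) ^ 2 := by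
  have hAx : ∀ i, (A *ᵥ x) i = (#(N i) : ℝ)⁻¹ * ∑ j ∈ N i, x j := by
    simp [mulVec, dotProduct, hA, mul_sum]
  simp only [hAx, card_mul_sq_mean_s3, sum_sub_distrib,
    sum_sum_eq_sum_card_nsmul_of_symm N hsym, nsmul_eq_mul, ← mul_sum]

theorem sum_sq_sorted_gaps_le {ι : Type*} [Fintype ι] {n : ℕ} (N : ι → Finset ι)
    (hself : ∀ i, i ∈ N i) (hconn : ∀ i j, Relation.ReflTransGen (fun a b => b ∈ N a) i j)
    (x : ι → ℝ) (σ : Fin (n + 1) ≃ ι) (hσ : Monotone fun l => x (σ l)) :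
    ∑ l : Fin n, (x (σ l.succ) - x (σ l.castSucc)) ^ 2 ≤
      ∑ i, (#(N i) : ℝ)⁻¹ * ∑ q ∈ N i ×ˢ N i, (x q.1 - x q.2) ^ 2 := by
  calc ∑ l : Fin n, (x (σ l.succ) - x (σ l.castSucc)) ^ 2
      ≤ ∑ l : Fin n, ∑ i, (#(N i) : ℝ)⁻¹ * ∑ q ∈ N i ×ˢ N i,
          if Xor (σ.symm q.1 ≤ l.castSucc) (σ.symm q.2 ≤ l.castSucc)
          then (x (σ l.succ) - x (σ l.castSucc)) ^ 2 else 0 :=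
        sum_le_sum fun l _ => le_sum_inv_card_mul_sum_xor N hself hconn
          (fun j => σ.symm j ≤ l.castSucc) (a := σ l.castSucc) (b := σ l.succ)
          (by simp) (by simp) (sq_nonneg _)
    _ = ∑ i, (#(N i) : ℝ)⁻¹ * ∑ q ∈ N i ×ˢ N i, ∑ l : Fin n,
          if Xor (σ.symm q.1 ≤ l.castSucc) (σ.symm q.2 ≤ l.castSucc)
          then (x (σ l.succ) - x (σ l.castSucc)) ^ 2 else 0 := by
        simp_rw [mul_sum]
        rw [sum_comm]
        exact sum_congr rfl fun i _ => sum_comm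
    _ ≤ ∑ i, (#(N i) : ℝ)⁻¹ * ∑ q ∈ N i ×ˢ N i, (x q.1 - x q.2) ^ 2 := by
        gcongr with i _ q _
        simpa using hσ.sum_sq_sub_xor_le (σ.symm q.1) (σ.symm q.2)

/-- For a connected undirected graph on `n+1` nodes with self-loops and
equal-neighbor matrix `A`, if `σ` sorts `x` nondecreasingly then
`V(Ax) ≤ V(x) - (1/2) Σ_l (x_{σ(l+1)} - x_{σ(l)})²`, where `V(y) = Σ_i d_i y_i²`. -/
theorem lyapunov_decrease_connected
    (n : ℕ) (N : Fin (n + 1) → Finset (Fin (n + 1)))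
    (hsym : ∀ i j, j ∈ N i ↔ i ∈ N j)
    (hself : ∀ i, i ∈ N i)
    (hconn : ∀ i j, Relation.ReflTransGen (fun a b => b ∈ N a) i j)
    (A : Matrix (Fin (n + 1)) (Fin (n + 1)) ℝ)
    (hA : ∀ i j, A i j = if j ∈ N i then ((N i).card : ℝ)⁻¹ else 0)
    (x : Fin (n + 1) → ℝ) (σ : Equiv.Perm (Fin (n + 1)))
    (hσ : Monotone fun l => x (σ l)) :
    ∑ i, ((N i).card : ℝ) * (A.mulVec x i) ^ 2 ≤
      ∑ i, ((N i).card : ℝ) * (x i) ^ 2 -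
        (1 / 2) * ∑ l : Fin n, (x (σ l.succ) - x (σ l.castSucc)) ^ 2 := by
  rw [sum_card_mul_sq_mulVec_eq N hsym A hA x]
  linarith [sum_sq_sorted_gaps_le N hself hconn x σ hσ]
end

section
/- Let d_1,...,d_n be reals with 1 ≤ d_i ≤ d_max for all i, and let x ∈ R^n be a nonconstant vector. Let x̄ = (Σ_i d_i x_i)/(Σ_i d_i), V'(x) = Σ_i d_i (x_i − x̄)^2, and let i[1],...,i[n] sort x in nondecreasing order. Then Σ_{l=1}^{n−1} (x_{i[l+1]} − x_{i[l]})^2 ≥ V'(x) / (n^2 d_max). -/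
/-- With weights `1 ≤ d_i ≤ d_max` on `n+1` nodes and a nonconstant
vector `x` sorted by a permutation `σ`, the sum of squared consecutive gaps is at
least `V'(x) / ((n+1)² d_max)`, where `V'(x) = Σ d_i (x i - x̄)²` and `x̄` is the
`d`-weighted average. -/
theorem gap_sum_lower_bound
    (n : ℕ) (d : Fin (n + 1) → ℝ) (dmax : ℝ)
    (hd1 : ∀ i, 1 ≤ d i) (hd2 : ∀ i, d i ≤ dmax)
    (x : Fin (n + 1) → ℝ) (hx : ∃ i j, x i ≠ x j)
    (σ : Equiv.Perm (Fin (n + 1)))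
    (hσ : Monotone fun l => x (σ l)) :
    (∑ i, d i * (x i - (∑ i, d i * x i) / ∑ i, d i) ^ 2) / ((n + 1 : ℝ) ^ 2 * dmax) ≤
      ∑ l : Fin n, (x (σ l.succ) - x (σ l.castSucc)) ^ 2 := by
  have hdmax : (1 : ℝ) ≤ dmax := le_trans (hd1 0) (hd2 0)
  set m := x (σ 0) with hm
  set M := x (σ (Fin.last n)) with hM
  set S := ∑ l : Fin n, (x (σ l.succ) - x (σ l.castSucc)) ^ 2 with hS
  have hSnn : 0 ≤ S := Finset.sum_nonneg fun l _ => sq_nonneg _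
  -- every value is between m and M
  have hmem : ∀ i, m ≤ x i ∧ x i ≤ M := by
    intro i
    have h1 : m ≤ x (σ (σ.symm i)) := hσ (Fin.zero_le _)
    have h2 : x (σ (σ.symm i)) ≤ M := hσ (Fin.le_last _)
    rw [Equiv.apply_symm_apply] at h1 h2
    exact ⟨h1, h2⟩
  -- telescoping: sum of gaps = M - m
  set f : ℕ → ℝ := fun i => x (σ ⟨min i n, Nat.lt_succ_of_le (min_le_right i n)⟩) with hf
  have htel : (∑ l : Fin n, (x (σ l.succ) - x (σ l.castSucc))) = M - m := by
    have h1 : (∑ l : Fin n, (x (σ l.succ) - x (σ l.castSucc)))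
        = ∑ l : Fin n, (f ((l : ℕ) + 1) - f (l : ℕ)) := by
      apply Finset.sum_congr rfl
      intro l _
      have h2 : min ((l : ℕ) + 1) n = (l : ℕ) + 1 := min_eq_left l.isLt
      have h3 : min (l : ℕ) n = (l : ℕ) := min_eq_left (le_of_lt l.isLt)
      have e1 : l.succ = (⟨min ((l : ℕ) + 1) n,
          Nat.lt_succ_of_le (min_le_right _ n)⟩ : Fin (n + 1)) := Fin.ext (by simp [h2])
      have e2 : l.castSucc = (⟨min (l : ℕ) n,
          Nat.lt_succ_of_le (min_le_right _ n)⟩ : Fin (n + 1)) := Fin.ext (by simp [h3])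
      rw [e1, e2]
    rw [h1, Fin.sum_univ_eq_sum_range (fun i => f (i + 1) - f i) n,
      Finset.sum_range_sub f n]
    have hfn : f n = M := by
      show x (σ ⟨min n n, _⟩) = M
      congr 2
      exact Fin.ext (by simp [Fin.last])
    have h0 : f 0 = m := by
      show x (σ ⟨min 0 n, _⟩) = m
      congr 2
    rw [hfn, h0]
  -- Cauchy-Schwarz
  have hcs : (M - m) ^ 2 ≤ (n : ℝ) * S := by
    rw [← htel]
    have := sq_sum_le_card_mul_sum_sq (s := Finset.univ)
      (f := fun l : Fin n => x (σ l.succ) - x (σ l.castSucc))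
    simpa using this
  have hMm : 0 ≤ M - m := by
    have := hmem (σ 0)
    linarith [this.1, this.2]
  -- the weighted mean is between m and M
  have hdpos : (0 : ℝ) < ∑ i, d i :=
    Finset.sum_pos (fun i _ => lt_of_lt_of_le one_pos (hd1 i)) Finset.univ_nonempty
  set xbar := (∑ i, d i * x i) / ∑ i, d i with hxbar
  have hbar1 : m ≤ xbar := by
    rw [hxbar, le_div_iff₀ hdpos, mul_comm, Finset.sum_mul]
    exact Finset.sum_le_sum fun i _ =>
      mul_le_mul_of_nonneg_left (hmem i).1 (le_trans zero_le_one (hd1 i))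
  have hbar2 : xbar ≤ M := by
    rw [hxbar, div_le_iff₀ hdpos, mul_comm, Finset.sum_mul]
    exact Finset.sum_le_sum fun i _ =>
      mul_le_mul_of_nonneg_left (hmem i).2 (le_trans zero_le_one (hd1 i))
  -- bound the variance
  have hvar : (∑ i, d i * (x i - xbar) ^ 2) ≤ (n + 1 : ℝ) * (dmax * (M - m) ^ 2) := by
    calc (∑ i, d i * (x i - xbar) ^ 2) ≤ ∑ _i : Fin (n + 1), dmax * (M - m) ^ 2 := by
          apply Finset.sum_le_sum
          intro i _
          have hsq : (x i - xbar) ^ 2 ≤ (M - m) ^ 2 := by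
            apply sq_le_sq'
            · linarith [(hmem i).1, hbar2]
            · linarith [(hmem i).2, hbar1]
          exact mul_le_mul (hd2 i) hsq (sq_nonneg _) (le_trans zero_le_one hdmax)
      _ = (n + 1 : ℝ) * (dmax * (M - m) ^ 2) := by
          rw [Finset.sum_const]
          simp [mul_assoc]
  rw [div_le_iff₀ (by positivity)]
  have hdnn : (0 : ℝ) ≤ dmax := le_trans zero_le_one hdmax
  have hnn : (0 : ℝ) ≤ (n : ℝ) := Nat.cast_nonneg n
  nlinarith [mul_le_mul_of_nonneg_left hcs hdnn, hvar, hSnn, hdnn, hnn,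
    mul_nonneg hdnn hSnn]
end

section
/- Let G(0), G(1), ... be a sequence of undirected graphs on {1,...,n}, each with self-loops at every node, and suppose there are fixed values d_1,...,d_n such that the degree of node i in G(t) is either d_i or 1 for every t. Let A(t) be the equal-neighbor matrices and suppose x(t+1) = A(t)x(t). Then the d-weighted average x̄(t) = (Σ_i d_i x_i(t))/(Σ_i d_i) is constant in t. -/
/-- For a sequence of undirected graphs with self-loops in which the
degree of node `i` at each time is either `d_i` or `1`, the `d`-weighted average of
the equal-neighbor iteration is constant in time. -/
theorem weighted_average_invariant
    (n : ℕ) (N : ℕ → Fin n → Finset (Fin n)) (d : Fin n → ℕ)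
    (hsym : ∀ t i j, j ∈ N t i ↔ i ∈ N t j)
    (hself : ∀ t i, i ∈ N t i)
    (hdeg : ∀ t i, (N t i).card = d i ∨ (N t i).card = 1)
    (x : ℕ → Fin n → ℝ)
    (hx : ∀ t i, x (t + 1) i = (∑ j ∈ N t i, x t j) / ((N t i).card : ℝ)) :
    ∀ t, (∑ i, (d i : ℝ) * x t i) / (∑ i, (d i : ℝ)) =
      (∑ i, (d i : ℝ) * x 0 i) / (∑ i, (d i : ℝ)) := by
  have key : ∀ t j, ∑ i ∈ N t j, (d i : ℝ) / ((N t i).card : ℝ) = d j := by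
    intro t j
    by_cases h1 : (N t j).card = 1
    · have hNj : N t j = {j} := by
        obtain ⟨a, ha⟩ := Finset.card_eq_one.mp h1
        have := hself t j
        rw [ha] at this ⊢
        simp_all
      rw [hNj]
      simp [hNj]
    · have hd : (N t j).card = d j := (hdeg t j).resolve_right h1
      have hall : ∀ i ∈ N t j, (d i : ℝ) / ((N t i).card : ℝ) = 1 := by
        intro i hi
        have hci : (N t i).card = d i := by
          rcases hdeg t i with h | h
          · exact h
          · exfalso
            obtain ⟨a, ha⟩ := Finset.card_eq_one.mp h
            have hji : j ∈ N t i := (hsym t j i).mp hi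
            have hii : i ∈ N t i := hself t i
            rw [ha] at hji hii
            simp only [Finset.mem_singleton] at hji hii
            exact h1 (hji ▸ hii ▸ h ▸ by rw [ha])
        have hpos : 0 < (N t i).card := Finset.card_pos.mpr ⟨i, hself t i⟩
        rw [hci]
        have : (d i : ℝ) ≠ 0 := by
          have : d i ≠ 0 := by omega
          exact_mod_cast this
        field_simp
      rw [Finset.sum_congr rfl hall]
      simp [hd]
  have step : ∀ t, ∑ i, (d i : ℝ) * x (t + 1) i = ∑ i, (d i : ℝ) * x t i := by
    intro t
    have h1 : ∀ i : Fin n, (d i : ℝ) * x (t + 1) i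
        = ∑ j ∈ N t i, ((d i : ℝ) / ((N t i).card : ℝ)) * x t j := by
      intro i
      rw [hx, Finset.sum_div, Finset.mul_sum]
      exact Finset.sum_congr rfl fun j _ => by ring
    calc ∑ i, (d i : ℝ) * x (t + 1) i
        = ∑ i, ∑ j ∈ N t i, ((d i : ℝ) / ((N t i).card : ℝ)) * x t j := by
          exact Finset.sum_congr rfl fun i _ => h1 i
      _ = ∑ j, ∑ i ∈ N t j, ((d i : ℝ) / ((N t i).card : ℝ)) * x t j := by
          refine Finset.sum_comm' (fun i j => ?_)
          simp [hsym t]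
      _ = ∑ j, (∑ i ∈ N t j, (d i : ℝ) / ((N t i).card : ℝ)) * x t j := by
          exact Finset.sum_congr rfl fun j _ => (Finset.sum_mul ..).symm
      _ = ∑ j, (d j : ℝ) * x t j := by
          exact Finset.sum_congr rfl fun j _ => by rw [key]
  intro t
  induction t with
  | zero => rfl
  | succ t ih => rw [← ih, step t]
end

section
/- Let G(0),...,G(B−1) be undirected graphs on {1,...,n} with self-loops at every node, whose union is connected, and such that node i has degree either d_i or 1 in each G(t). Let A(t) be the equal-neighbor matrices and x(t+1) = A(t)x(t). Let i[·] sort x(0) nondecreasingly. Then V(x(B)) ≤ V(x(0)) − (1/2) Σ_{l=1}^{n−1} (x_{i[l+1]}(0) − x_{i[l]}(0))^2, where V(y) = Σ_i d_i y_i^2. -/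
/-!
Averaging over a neighbourhood `N i` trades `∑_{j ∈ N i} y_j²` for `|N i|` times the squared
mean, and the difference is the local spread `∑_{j ∈ N i} (y_j - mean_i)²`. Since the graphs
are symmetric and a node of degree `1` keeps its value, one step lowers `V` by exactly the total
spread.

For a gap `l` of the sorted initial vector, connectivity gives a first time at which an edge
crosses the cut between the `l + 1` smallest initial values and the others. Until then both sides
stay separated by the gap, so at that time some node `c` with `x c ≥ x_{i[l+1]}(0)` has a
neighbour `u` with `x u ≤ x_{i[l]}(0)`. Gaps charged to the same pair `(t, c)` are disjoint
subintervals of `[min_{N c} x, x c]`, so their squares add up to at most `(x c - min_{N c} x)²`,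
which is at most twice the spread at `c`.
-/

open Finset

variable {ι : Type*}

theorem sq_sub_le_two_mul_sum_sq_sub {S : Finset ι} (y : ι → ℝ) (m : ℝ)
    {u v : ι} (hu : u ∈ S) (hv : v ∈ S) :
    (y u - y v) ^ 2 ≤ 2 * ∑ j ∈ S, (y j - m) ^ 2 := by
  classical
  by_cases huv : u = v
  · subst huv
    rw [sub_self, zero_pow two_ne_zero]
    positivity
  have hpair : (y u - m) ^ 2 + (y v - m) ^ 2 ≤ ∑ j ∈ S, (y j - m) ^ 2 := by
    rw [← sum_pair huv (f := fun j => (y j - m) ^ 2)]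
    exact sum_le_sum_of_subset_of_nonneg (insert_subset hu (singleton_subset_iff.2 hv))
      fun _ _ _ => sq_nonneg _
  nlinarith [sq_nonneg (y u + y v - 2 * m)]

theorem card_mul_sq_mean {S : Finset ι} (hS : S.Nonempty) (y : ι → ℝ) :
    (#S : ℝ) * ((∑ j ∈ S, y j) / #S) ^ 2 =
      ∑ j ∈ S, y j ^ 2 - ∑ j ∈ S, (y j - (∑ j ∈ S, y j) / #S) ^ 2 := by
  have hcard : (#S : ℝ) ≠ 0 := by positivity
  simp only [sub_sq, sum_add_distrib, sum_sub_distrib, sum_const, nsmul_eq_mul, ← sum_mul,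
    ← mul_sum]
  field_simp
  ring

noncomputable def lyapunov [Fintype ι] (d : ι → ℕ) (y : ι → ℝ) : ℝ :=
  ∑ i, (d i : ℝ) * y i ^ 2

noncomputable def neighborAvg (N : ι → Finset ι) (y : ι → ℝ) (i : ι) : ℝ :=
  (∑ j ∈ N i, y j) / #(N i)

noncomputable def dissipation [Fintype ι] (N : ι → Finset ι) (y : ι → ℝ) : ℝ :=
  ∑ i, ∑ j ∈ N i, (y j - neighborAvg N y i) ^ 2

section Step

variable {N : ι → Finset ι} {y : ι → ℝ}

theorem sum_sum_neighbors_eq_sum_card_mul [Fintype ι] (hsym : ∀ i j, j ∈ N i ↔ i ∈ N j)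
    (f : ι → ℝ) :
    ∑ i, ∑ j ∈ N i, f j = ∑ j, (#(N j) : ℝ) * f j := by
  rw [sum_comm' (t' := univ) (s' := N) fun i j => by simp [hsym i j]]
  simp [sum_const, nsmul_eq_mul]

theorem neighborAvg_of_card_eq_one {i : ι} (hself : i ∈ N i) (h : #(N i) = 1) :
    neighborAvg N y i = y i := by
  obtain ⟨a, ha⟩ := card_eq_one.1 h
  obtain rfl : i = a := by simpa [ha] using hself
  simp [neighborAvg, ha]

theorem mul_sq_neighborAvg {d : ι → ℕ} {i : ι} (hself : i ∈ N i)
    (hdeg : #(N i) = d i ∨ #(N i) = 1) :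
    (d i : ℝ) * neighborAvg N y i ^ 2 = (d i - #(N i)) * y i ^ 2 + ∑ j ∈ N i, y j ^ 2 -
      ∑ j ∈ N i, (y j - neighborAvg N y i) ^ 2 := by
  have hmean := card_mul_sq_mean ⟨i, hself⟩ y
  rw [← neighborAvg] at hmean
  rcases hdeg with h | h
  · rw [← h]; linarith
  · rw [h] at hmean ⊢
    rw [neighborAvg_of_card_eq_one hself h] at hmean ⊢
    push_cast at hmean ⊢
    linarith

theorem lyapunov_neighborAvg [Fintype ι] {d : ι → ℕ} (hsym : ∀ i j, j ∈ N i ↔ i ∈ N j)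
    (hself : ∀ i, i ∈ N i) (hdeg : ∀ i, #(N i) = d i ∨ #(N i) = 1) (y : ι → ℝ) :
    lyapunov d (neighborAvg N y) = lyapunov d y - dissipation N y := by
  simp only [lyapunov, dissipation, mul_sq_neighborAvg (hself _) (hdeg _), sum_sub_distrib,
    sum_add_distrib, sum_sum_neighbors_eq_sum_card_mul hsym]
  simp only [← sum_add_distrib, sub_mul, sub_add_cancel]

theorem neighborAvg_le {i : ι} {a : ℝ} (hne : (N i).Nonempty) (h : ∀ j ∈ N i, y j ≤ a) :
    neighborAvg N y i ≤ a := by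
  rw [neighborAvg, div_le_iff₀ (by simp [hne])]
  simpa [mul_comm] using sum_le_card_nsmul _ _ _ h

theorem le_neighborAvg {i : ι} {a : ℝ} (hne : (N i).Nonempty) (h : ∀ j ∈ N i, a ≤ y j) :
    a ≤ neighborAvg N y i := by
  rw [neighborAvg, le_div_iff₀ (by simp [hne])]
  simpa [mul_comm] using card_nsmul_le_sum _ _ _ h

end Step

def Crosses (N : ι → Finset ι) (S : Set ι) : Prop :=
  ∃ u ∈ S, ∃ v ∉ S, v ∈ N u

theorem Relation.ReflTransGen.exists_rel_of_mem_of_notMem {r : ι → ι → Prop} {S : Set ι}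
    {a b : ι} (h : Relation.ReflTransGen r a b) (ha : a ∈ S) (hb : b ∉ S) :
    ∃ u ∈ S, ∃ v ∉ S, r u v := by
  induction h with
  | refl => exact absurd ha hb
  | @tail c _ _ hcb ih =>
    by_cases hc : c ∈ S
    · exact ⟨c, hc, _, hb, hcb⟩
    · exact ih hc

section Orbit

variable {N : ℕ → ι → Finset ι} {x : ℕ → ι → ℝ}

theorem lyapunov_orbit_eq_sub_sum_dissipation [Fintype ι] {d : ι → ℕ}
    (hsym : ∀ t i j, j ∈ N t i ↔ i ∈ N t j)
    (hself : ∀ t i, i ∈ N t i) (hdeg : ∀ t i, #(N t i) = d i ∨ #(N t i) = 1)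
    (hx : ∀ t i, x (t + 1) i = neighborAvg (N t) (x t) i) (T : ℕ) :
    lyapunov d (x T) = lyapunov d (x 0) - ∑ t ∈ range T, dissipation (N t) (x t) := by
  induction T with
  | zero => simp
  | succ T ih =>
    rw [funext (hx T), lyapunov_neighborAvg (hsym T) (hself T) (hdeg T), ih, sum_range_succ]
    ring

theorem orbit_separated_of_not_crosses (hsym : ∀ t i j, j ∈ N t i ↔ i ∈ N t j)
    (hself : ∀ t i, i ∈ N t i) (hx : ∀ t i, x (t + 1) i = neighborAvg (N t) (x t) i)
    {S : Set ι} {a b : ℝ} (hlo : ∀ u ∈ S, x 0 u ≤ a) (hhi : ∀ v ∉ S, b ≤ x 0 v)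
    {T : ℕ} (hT : ∀ t < T, ¬ Crosses (N t) S) :
    (∀ u ∈ S, x T u ≤ a) ∧ ∀ v ∉ S, b ≤ x T v := by
  induction T with
  | zero => exact ⟨hlo, hhi⟩
  | succ T ih =>
    obtain ⟨ihlo, ihhi⟩ := ih fun t ht => hT t (ht.trans T.lt_succ_self)
    have hcut : ∀ u ∈ S, ∀ v ∈ N T u, v ∈ S := fun u hu v hv => by
      by_contra hvS
      exact hT T T.lt_succ_self ⟨u, hu, v, hvS, hv⟩
    refine ⟨fun u hu => ?_, fun v hv => ?_⟩
    · rw [hx]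
      exact neighborAvg_le ⟨u, hself T u⟩ fun j hj => ihlo j (hcut u hu j hj)
    · rw [hx]
      exact le_neighborAvg ⟨v, hself T v⟩ fun j hj =>
        ihhi j fun hjS => hv (hcut j hjS v ((hsym T v j).1 hj))

theorem exists_separated_edge (hsym : ∀ t i j, j ∈ N t i ↔ i ∈ N t j)
    (hself : ∀ t i, i ∈ N t i) (hx : ∀ t i, x (t + 1) i = neighborAvg (N t) (x t) i)
    {S : Set ι} {a b : ℝ} (hlo : ∀ u ∈ S, x 0 u ≤ a) (hhi : ∀ v ∉ S, b ≤ x 0 v)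
    {B : ℕ} (hcross : ∃ t < B, Crosses (N t) S) :
    ∃ t < B, ∃ c, b ≤ x t c ∧ ∃ u ∈ N t c, x t u ≤ a := by
  classical
  have hex : ∃ t, Crosses (N t) S := hcross.imp fun _ => And.right
  obtain ⟨t₁, ht₁B, ht₁⟩ := hcross
  obtain ⟨u, hu, v, hv, huv⟩ := Nat.find_spec hex
  obtain ⟨hsep_lo, hsep_hi⟩ :=
    orbit_separated_of_not_crosses hsym hself hx hlo hhi fun t ht => Nat.find_min hex ht
  exact ⟨Nat.find hex, (Nat.find_min' hex ht₁).trans_lt ht₁B, v, hsep_hi v hv, u,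
    (hsym _ _ _).1 huv, hsep_lo u hu⟩

end Orbit

section Gaps

variable {n : ℕ} {s : Fin (n + 1) → ℝ}

theorem sum_gaps_le (hs : Monotone s) {L : Finset (Fin n)} {a b : ℝ} (hab : a ≤ b)
    (ha : ∀ l ∈ L, a ≤ s l.castSucc) (hb : ∀ l ∈ L, s l.succ ≤ b) :
    ∑ l ∈ L, (s l.succ - s l.castSucc) ≤ b - a := by
  induction L using Finset.induction_on_max generalizing b with
  | empty => simpa using hab
  | insert m L hlt ih =>
    have hm := mem_insert_self m L
    have hL : ∑ l ∈ L, (s l.succ - s l.castSucc) ≤ s m.castSucc - a :=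
      ih (ha m hm) (fun l hl => ha l (mem_insert_of_mem hl))
        fun l hl => hs <| Fin.castSucc_lt_iff_succ_le.1 <|
          Fin.castSucc_lt_castSucc_iff.2 (hlt l hl)
    rw [sum_insert fun hmL => (hlt m hmL).false]
    linarith [hb m hm]

theorem sum_sq_gaps_le (hs : Monotone s) {L : Finset (Fin n)} {S : Finset ι}
    {y : ι → ℝ} (m : ℝ) {c : ι} (hc : c ∈ S)
    (hlo : ∀ l ∈ L, ∃ u ∈ S, y u ≤ s l.castSucc)
    (hhi : ∀ l ∈ L, s l.succ ≤ y c) :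
    ∑ l ∈ L, (s l.succ - s l.castSucc) ^ 2 ≤ 2 * ∑ j ∈ S, (y j - m) ^ 2 := by
  obtain ⟨u, hu, hmin⟩ := S.exists_min_image y ⟨c, hc⟩
  have hgap : ∀ l ∈ L, 0 ≤ s l.succ - s l.castSucc :=
    fun l _ => sub_nonneg.2 (hs Fin.castSucc_lt_succ.le)
  have hsum : ∑ l ∈ L, (s l.succ - s l.castSucc) ≤ y c - y u :=
    sum_gaps_le hs (hmin c hc)
      (fun l hl => (hlo l hl).elim fun _ ⟨hu', h⟩ => (hmin _ hu').trans h) hhi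
  calc ∑ l ∈ L, (s l.succ - s l.castSucc) ^ 2
      ≤ (∑ l ∈ L, (s l.succ - s l.castSucc)) ^ 2 := sum_sq_le_sq_sum_of_nonneg hgap
    _ ≤ (y c - y u) ^ 2 := pow_le_pow_left₀ (sum_nonneg hgap) hsum 2
    _ ≤ 2 * ∑ j ∈ S, (y j - m) ^ 2 := sq_sub_le_two_mul_sum_sq_sub y m hc hu

theorem sum_sq_gaps_le_two_mul_sum_dissipation [Fintype ι] {N : ℕ → ι → Finset ι}
    {x : ℕ → ι → ℝ} {B : ℕ} (hself : ∀ t i, i ∈ N t i) (hs : Monotone s)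
    (hcover : ∀ l : Fin n,
      ∃ t < B, ∃ c, s l.succ ≤ x t c ∧ ∃ u ∈ N t c, x t u ≤ s l.castSucc) :
    ∑ l : Fin n, (s l.succ - s l.castSucc) ^ 2 ≤
      2 * ∑ t ∈ range B, dissipation (N t) (x t) := by
  classical
  choose τ hτB c hc hlo using hcover
  have hmaps : ∀ l ∈ (univ : Finset (Fin n)), (τ l, c l) ∈ range B ×ˢ (univ : Finset ι) :=
    fun l _ => by simp [hτB l]
  rw [← sum_fiberwise_of_maps_to hmaps, sum_product, mul_sum]
  refine sum_le_sum fun t _ => ?_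
  rw [dissipation, mul_sum]
  refine sum_le_sum fun i _ =>
    sum_sq_gaps_le hs _ (hself t i) (fun l hl => ?_) fun l hl => ?_
  all_goals obtain ⟨rfl, rfl⟩ := Prod.ext_iff.1 (mem_filter.1 hl).2
  exacts [hlo l, hc l]

end Gaps

/-- For graphs `G(0),...,G(B-1)` with self-loops on `n+1` nodes whose
union is connected, with degrees `d_i(t) ∈ {1, d_i}`, the equal-neighbor iteration
satisfies `V(x(B)) ≤ V(x(0)) - (1/2) Σ_l (x_{i[l+1]}(0) - x_{i[l]}(0))²`, where `σ`
sorts `x(0)` nondecreasingly and `V(y) = Σ_i d_i y_i²`. -/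
theorem block_lyapunov_decrease
    (n B : ℕ) (N : ℕ → Fin (n + 1) → Finset (Fin (n + 1))) (d : Fin (n + 1) → ℕ)
    (hsym : ∀ t i j, j ∈ N t i ↔ i ∈ N t j)
    (hself : ∀ t i, i ∈ N t i)
    (hdeg : ∀ t i, (N t i).card = d i ∨ (N t i).card = 1)
    (hconn : ∀ i j, Relation.ReflTransGen (fun a b => ∃ t < B, b ∈ N t a) i j)
    (x : ℕ → Fin (n + 1) → ℝ)
    (hx : ∀ t i, x (t + 1) i = (∑ j ∈ N t i, x t j) / ((N t i).card : ℝ))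
    (σ : Equiv.Perm (Fin (n + 1)))
    (hσ : Monotone fun l => x 0 (σ l)) :
    ∑ i, (d i : ℝ) * (x B i) ^ 2 ≤
      ∑ i, (d i : ℝ) * (x 0 i) ^ 2 -
        (1 / 2) * ∑ l : Fin n, (x 0 (σ l.succ) - x 0 (σ l.castSucc)) ^ 2 := by
  have hV := lyapunov_orbit_eq_sub_sum_dissipation hsym hself hdeg hx B
  have hcover (l : Fin n) : ∃ t < B, ∃ c, x 0 (σ l.succ) ≤ x t c ∧
      ∃ u ∈ N t c, x t u ≤ x 0 (σ l.castSucc) := by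
    let S : Set (Fin (n + 1)) := {u | σ.symm u ≤ l.castSucc}
    refine exists_separated_edge hsym hself hx (S := S) (fun u hu => ?_) (fun v hv => ?_) ?_
    · simpa using hσ hu
    · simpa using hσ (Fin.castSucc_lt_iff_succ_le.1 (not_le.1 hv))
    · obtain ⟨u, hu, v, hv, t, ht, huv⟩ :=
        (hconn (σ l.castSucc) (σ l.succ)).exists_rel_of_mem_of_notMem (S := S)
          (by simp [S]) (by simp [S])
      exact ⟨t, ht, u, hu, v, hv, huv⟩
  have hgaps := sum_sq_gaps_le_two_mul_sum_dissipation hself hσ hcover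
  rw [lyapunov, lyapunov] at hV
  linarith
end

section
/- Consider a sequence G(0), G(1), ..., G(k−1) of B-connected undirected graphs on n nodes with self-loops at every node, such that for each node i there exists d_i with d_i(t) ∈ {1, d_i} for all t. If k ≥ B + 4n^3 B ln(2n/ε), then the equal-neighbor iteration x(t+1) = A(t)x(t) achieves ε-consensus: S(x(k)) ≤ ε S(x(0)) for every initial vector x(0), where S(x) = max_i x_i − min_i x_i. -/
/-!
Let `w i` be the non-trivial degree `d i` of node `i` (clamped to `[1, n]`). An edge between
`i ≠ j` at time `t` forces both degrees to be the non-trivial ones, so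
`∑ i ∈ N t j, w i / d_i(t) = w j`: the vector `w` is a common left eigenvector of all the
averaging matrices. Hence the `w`-weighted mean `μ` is conserved, and the energy
`V = ∑ i, w i (x i - μ)²` drops at each step by at least the dissipation
`∑ i, ∑ j ∈ N t i, (x t j - x (t + 1) i)²`, since `w i ≥ d_i(t)`.

In a window of length `B`, sort the values at its start. Each cut between consecutive values
is crossed by some edge of the window, and until the first crossing both sides stay on their
side of the gap. Charging every gap to the node that first sees it across an edge (several gaps
charged to one node span disjoint parts of the values in its neighbourhood) gives a dissipation
of at least `S² / (2n)` over the window, where `S` is the spread. As `V ≤ n² S²`, each window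
multiplies `V` by at most `1 - 1 / (2n³)`, and `S² ≤ 2V` at the end.
-/

open Finset Relation

theorem Finset.sum_sq_sub_average {α : Type*} {s : Finset α} (hs : s.Nonempty) (f : α → ℝ)
    (c : ℝ) :
    ∑ j ∈ s, (f j - (∑ k ∈ s, f k) / #s) ^ 2 =
      ∑ j ∈ s, (f j - c) ^ 2 - #s * ((∑ k ∈ s, f k) / #s - c) ^ 2 := by
  set m := (∑ k ∈ s, f k) / #s
  have hsum : ∑ j ∈ s, (f j - c) = #s * (m - c) := by
    have : (#s : ℝ) ≠ 0 := by exact_mod_cast hs.card_pos.ne'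
    rw [sum_sub_distrib, sum_const, nsmul_eq_mul, mul_sub, mul_div_cancel₀ _ this]
  have hexpand : ∀ j, (f j - m) ^ 2 = (f j - c) ^ 2 - 2 * (m - c) * (f j - c) + (m - c) ^ 2 :=
    fun j => by ring
  simp only [hexpand, sum_add_distrib, sum_sub_distrib, ← mul_sum, hsum, sum_const, nsmul_eq_mul]
  ring

theorem Finset.sq_sup'_sub_inf'_le {α : Type*} {s : Finset α} (hs : s.Nonempty) (f : α → ℝ)
    (c : ℝ) :
    (s.sup' hs f - s.inf' hs f) ^ 2 ≤ 2 * ∑ j ∈ s, (f j - c) ^ 2 := by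
  classical
  obtain ⟨a, ha, hfa⟩ := s.exists_mem_eq_sup' hs f
  obtain ⟨b, hb, hfb⟩ := s.exists_mem_eq_inf' hs f
  rw [hfa, hfb]
  rcases eq_or_ne a b with rfl | hab
  · rw [sub_self, zero_pow two_ne_zero]
    positivity
  calc (f a - f b) ^ 2 ≤ 2 * ((f a - c) ^ 2 + (f b - c) ^ 2) := by
        nlinarith [sq_nonneg (f a + f b - 2 * c)]
    _ = 2 * ∑ j ∈ {a, b}, (f j - c) ^ 2 := by rw [sum_pair hab]
    _ ≤ 2 * ∑ j ∈ s, (f j - c) ^ 2 := by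
        gcongr 2 * ?_
        exact sum_le_sum_of_subset_of_nonneg (insert_subset ha (singleton_subset_iff.mpr hb))
          fun _ _ _ => sq_nonneg _

theorem Monotone.sum_increments_le {G : ℕ → ℝ} (hG : Monotone G) {F : Finset ℕ} {lo hi : ℝ}
    (hlohi : lo ≤ hi) (hF : ∀ l ∈ F, lo ≤ G l ∧ G (l + 1) ≤ hi) :
    ∑ l ∈ F, (G (l + 1) - G l) ≤ hi - lo := by
  rcases F.eq_empty_or_nonempty with rfl | hne
  · simpa using hlohi
  have hsub : F ⊆ Ico (F.min' hne) (F.max' hne + 1) := fun l hl =>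
    mem_Ico.mpr ⟨F.min'_le l hl, Nat.lt_succ_of_le (F.le_max' l hl)⟩
  calc ∑ l ∈ F, (G (l + 1) - G l)
      ≤ ∑ l ∈ Ico (F.min' hne) (F.max' hne + 1), (G (l + 1) - G l) :=
        sum_le_sum_of_subset_of_nonneg hsub fun l _ _ => sub_nonneg.mpr (hG l.le_succ)
    _ = G (F.max' hne + 1) - G (F.min' hne) :=
        sum_Ico_sub G (Nat.le_succ_of_le (F.min'_le_max' hne))
    _ ≤ hi - lo := by
        linarith [(hF _ (F.max'_mem hne)).2, (hF _ (F.min'_mem hne)).1]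

theorem Monotone.sum_sq_increments_le {α : Type*} {G : ℕ → ℝ} (hG : Monotone G)
    {F : Finset ℕ} {s : Finset α} (hs : s.Nonempty) (f : α → ℝ) (c : ℝ)
    (hF : ∀ l ∈ F, (∃ v ∈ s, f v ≤ G l) ∧ ∃ u ∈ s, G (l + 1) ≤ f u) :
    ∑ l ∈ F, (G (l + 1) - G l) ^ 2 ≤ 2 * ∑ j ∈ s, (f j - c) ^ 2 := by
  have hgap : ∀ l, 0 ≤ G (l + 1) - G l := fun l => sub_nonneg.mpr (hG l.le_succ)
  calc ∑ l ∈ F, (G (l + 1) - G l) ^ 2 ≤ (∑ l ∈ F, (G (l + 1) - G l)) ^ 2 :=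
        sum_sq_le_sq_sum_of_nonneg fun l _ => hgap l
    _ ≤ (s.sup' hs f - s.inf' hs f) ^ 2 := by
        gcongr
        · exact sum_nonneg fun l _ => hgap l
        refine hG.sum_increments_le
          ((inf'_le f hs.choose_spec).trans (le_sup' f hs.choose_spec)) fun l hl => ?_
        obtain ⟨⟨v, hv, hfv⟩, u, hu, hfu⟩ := hF l hl
        exact ⟨(inf'_le f hv).trans hfv, hfu.trans (le_sup' f hu)⟩
    _ ≤ 2 * ∑ j ∈ s, (f j - c) ^ 2 := sq_sup'_sub_inf'_le hs f c

theorem Relation.ReflTransGen.exists_mem_not_mem {α : Type*} {r : α → α → Prop} {T : Set α}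
    {a b : α} (h : ReflTransGen r a b) (ha : a ∈ T) (hb : b ∉ T) : ∃ i ∈ T, ∃ j ∉ T, r i j := by
  induction h with
  | refl => exact absurd ha hb
  | @tail p q _ hpq ih =>
    by_cases hp : p ∈ T
    · exact ⟨p, hp, q, hb, hpq⟩
    · exact ih hp

namespace EqualNeighbor

variable {ι : Type*} {N : ℕ → ι → Finset ι} {x : ℕ → ι → ℝ} {w : ι → ℝ}

theorem forall_mem_le_of_closed (hself : ∀ t i, i ∈ N t i)
    (hx : ∀ t i, x (t + 1) i = (∑ j ∈ N t i, x t j) / #(N t i)) {T : Set ι} {L : ℝ} {τ t : ℕ}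
    (hτt : τ ≤ t) (hT : ∀ s, τ ≤ s → s < t → ∀ i ∈ T, ∀ j ∈ N s i, j ∈ T)
    (h₀ : ∀ i ∈ T, x τ i ≤ L) : ∀ i ∈ T, x t i ≤ L := by
  induction t, hτt using Nat.le_induction with
  | base => exact h₀
  | succ t hτt ih =>
    intro i hi
    rw [hx t i, ← expect_eq_sum_div_card]
    exact expect_le ⟨i, hself t i⟩ fun j hj =>
      ih (fun s hs hst => hT s hs (hst.trans t.lt_succ_self)) j
        (hT t hτt t.lt_succ_self i hi j hj)

theorem exists_first_exit {τ τ' : ℕ}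
    (hconn : ∀ i j, ReflTransGen (fun a b => ∃ t, τ ≤ t ∧ t < τ' ∧ b ∈ N t a) i j)
    {T : Set ι} {a b : ι} (ha : a ∈ T) (hb : b ∉ T) :
    ∃ t, τ ≤ t ∧ t < τ' ∧ (∀ s, τ ≤ s → s < t → ∀ i ∈ T, ∀ j ∈ N s i, j ∈ T) ∧
      ∃ i ∈ T, ∃ j ∉ T, j ∈ N t i := by
  classical
  have hex : ∃ t, τ ≤ t ∧ t < τ' ∧ ∃ i ∈ T, ∃ j ∉ T, j ∈ N t i := by
    obtain ⟨i, hi, j, hj, t, ht, ht', hij⟩ := (hconn a b).exists_mem_not_mem ha hb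
    exact ⟨t, ht, ht', i, hi, j, hj, hij⟩
  obtain ⟨hτt, htτ', hexit⟩ := Nat.find_spec hex
  refine ⟨Nat.find hex, hτt, htτ', fun s hs hst i hi j hj => ?_, hexit⟩
  by_contra hjT
  exact Nat.find_min hex hst ⟨hs, hst.trans htτ', i, hi, j, hjT, hj⟩

theorem exists_edge_across_gap (hsym : ∀ t i j, j ∈ N t i ↔ i ∈ N t j)
    (hself : ∀ t i, i ∈ N t i) (hx : ∀ t i, x (t + 1) i = (∑ j ∈ N t i, x t j) / #(N t i))
    {τ τ' : ℕ} (hconn : ∀ i j, ReflTransGen (fun a b => ∃ t, τ ≤ t ∧ t < τ' ∧ b ∈ N t a) i j)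
    {L U : ℝ} (hLU : L < U) (hgap : ∀ i, x τ i ≤ L ∨ U ≤ x τ i) {a b : ι}
    (ha : x τ a ≤ L) (hb : U ≤ x τ b) :
    ∃ t, τ ≤ t ∧ t < τ' ∧ ∃ i, ∃ v ∈ N t i, x t v ≤ L ∧ U ≤ x t i := by
  set T : Set ι := {i | x τ i ≤ L}
  have hTc : ∀ i ∉ T, U ≤ x τ i := fun i hi => (hgap i).resolve_left hi
  obtain ⟨t, hτt, htτ', hstay, v, hv, i, hi, hvi⟩ :=
    exists_first_exit hconn (T := T) ha (not_le.mpr (hLU.trans_le hb))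
  refine ⟨t, hτt, htτ', i, v, (hsym t v i).mp hvi,
    forall_mem_le_of_closed hself hx hτt hstay (fun _ h => h) v hv, ?_⟩
  -- the complement of `T` cannot be left before time `t` either, by symmetry
  have hneg : ∀ t i, -x (t + 1) i = (∑ j ∈ N t i, -x t j) / #(N t i) := fun t i => by
    rw [hx t i, sum_neg_distrib, neg_div]
  have := forall_mem_le_of_closed (x := fun t i => -x t i) (T := Tᶜ) hself hneg hτt
    (fun s hs hst j hj k hk hkT => hj (hstay s hs hst k hkT j ((hsym s j k).mp hk)))
    (fun j hj => neg_le_neg (hTc j hj)) i hi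
  exact neg_le_neg_iff.mp this

variable [Fintype ι]

def spread [Nonempty ι] (f : ι → ℝ) : ℝ :=
  univ.sup' univ_nonempty f - univ.inf' univ_nonempty f

def energy (w : ι → ℝ) (c : ℝ) (f : ι → ℝ) : ℝ :=
  ∑ i, w i * (f i - c) ^ 2

def dissipation (N : ℕ → ι → Finset ι) (x : ℕ → ι → ℝ) (t : ℕ) : ℝ :=
  ∑ i, ∑ j ∈ N t i, (x t j - x (t + 1) i) ^ 2

theorem spread_nonneg [Nonempty ι] (f : ι → ℝ) : 0 ≤ spread f :=
  sub_nonneg.mpr <|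
    (inf'_le f (mem_univ (Classical.arbitrary ι))).trans (le_sup' f (mem_univ _))

theorem sum_mul_average_eq (hsym : ∀ t i j, j ∈ N t i ↔ i ∈ N t j)
    (hw : ∀ t j, ∑ i ∈ N t j, w i / #(N t i) = w j) (t : ℕ) (F : ι → ℝ) :
    ∑ i, w i * ((∑ j ∈ N t i, F j) / #(N t i)) = ∑ j, w j * F j := by
  have hi : ∀ i,
      w i * ((∑ j ∈ N t i, F j) / #(N t i)) = ∑ j ∈ N t i, w i / #(N t i) * F j :=
    fun i => by rw [← mul_sum]; ring
  simp_rw [hi]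
  rw [sum_comm' (t' := univ) (s' := N t) fun i j => by simp [hsym t i j]]
  simp_rw [← sum_mul, hw]

theorem sum_mul_eq_sum_mul_zero (hsym : ∀ t i j, j ∈ N t i ↔ i ∈ N t j)
    (hx : ∀ t i, x (t + 1) i = (∑ j ∈ N t i, x t j) / #(N t i))
    (hw : ∀ t j, ∑ i ∈ N t j, w i / #(N t i) = w j) (t : ℕ) :
    ∑ i, w i * x t i = ∑ i, w i * x 0 i := by
  induction t with
  | zero => rfl
  | succ t ih => simp_rw [hx t, sum_mul_average_eq hsym hw, ih]

theorem energy_succ_add (hsym : ∀ t i j, j ∈ N t i ↔ i ∈ N t j) (hself : ∀ t i, i ∈ N t i)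
    (hx : ∀ t i, x (t + 1) i = (∑ j ∈ N t i, x t j) / #(N t i))
    (hw : ∀ t j, ∑ i ∈ N t j, w i / #(N t i) = w j) (t : ℕ) (c : ℝ) :
    energy w c (x (t + 1)) + ∑ i, w i / #(N t i) * ∑ j ∈ N t i, (x t j - x (t + 1) i) ^ 2 =
      energy w c (x t) := by
  have hi : ∀ i, w i / #(N t i) * ∑ j ∈ N t i, (x t j - x (t + 1) i) ^ 2 =
      w i * ((∑ j ∈ N t i, (x t j - c) ^ 2) / #(N t i)) - w i * (x (t + 1) i - c) ^ 2 := by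
    intro i
    have hn : (#(N t i) : ℝ) ≠ 0 := by exact_mod_cast (card_pos.mpr ⟨i, hself t i⟩).ne'
    rw [hx t i, sum_sq_sub_average ⟨i, hself t i⟩ (x t) c]
    field_simp
  rw [energy, energy, sum_congr rfl fun i _ => hi i, sum_sub_distrib,
    sum_mul_average_eq hsym hw]
  ring

theorem energy_succ_add_dissipation_le (hsym : ∀ t i j, j ∈ N t i ↔ i ∈ N t j)
    (hself : ∀ t i, i ∈ N t i) (hx : ∀ t i, x (t + 1) i = (∑ j ∈ N t i, x t j) / #(N t i))
    (hw : ∀ t j, ∑ i ∈ N t j, w i / #(N t i) = w j) (hlo : ∀ t i, (#(N t i) : ℝ) ≤ w i)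
    (t : ℕ) (c : ℝ) :
    energy w c (x (t + 1)) + dissipation N x t ≤ energy w c (x t) := by
  rw [← energy_succ_add hsym hself hx hw t c, dissipation]
  gcongr with i
  refine le_mul_of_one_le_left (sum_nonneg fun _ _ => sq_nonneg _) ?_
  have hn : (0 : ℝ) < #(N t i) := by exact_mod_cast card_pos.mpr ⟨i, hself t i⟩
  rw [one_le_div hn]
  exact hlo t i

theorem dissipation_nonneg (t : ℕ) : 0 ≤ dissipation N x t :=
  sum_nonneg fun _ _ => sum_nonneg fun _ _ => sq_nonneg _

theorem sum_dissipation_le (hsym : ∀ t i j, j ∈ N t i ↔ i ∈ N t j)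
    (hself : ∀ t i, i ∈ N t i) (hx : ∀ t i, x (t + 1) i = (∑ j ∈ N t i, x t j) / #(N t i))
    (hw : ∀ t j, ∑ i ∈ N t j, w i / #(N t i) = w j) (hlo : ∀ t i, (#(N t i) : ℝ) ≤ w i)
    (c : ℝ) {τ τ' : ℕ} (hττ' : τ ≤ τ') :
    ∑ t ∈ Ico τ τ', dissipation N x t ≤ energy w c (x τ) - energy w c (x τ') := by
  rw [← neg_sub, ← sum_Ico_sub (fun t => energy w c (x t)) hττ', ← sum_neg_distrib]
  exact sum_le_sum fun t _ => by
    linarith [energy_succ_add_dissipation_le hsym hself hx hw hlo t c]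

theorem energy_antitone (hsym : ∀ t i j, j ∈ N t i ↔ i ∈ N t j)
    (hself : ∀ t i, i ∈ N t i) (hx : ∀ t i, x (t + 1) i = (∑ j ∈ N t i, x t j) / #(N t i))
    (hw : ∀ t j, ∑ i ∈ N t j, w i / #(N t i) = w j) (hlo : ∀ t i, (#(N t i) : ℝ) ≤ w i)
    (c : ℝ) : Antitone fun t => energy w c (x t) :=
  antitone_nat_of_succ_le fun t => by
    linarith [energy_succ_add_dissipation_le hsym hself hx hw hlo t c,
      dissipation_nonneg (N := N) (x := x) t]

theorem exists_levels [Nonempty ι] (f : ι → ℝ) :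
    ∃ G : ℕ → ℝ, Monotone G ∧ G 0 = univ.inf' univ_nonempty f ∧
      G (Fintype.card ι) = univ.sup' univ_nonempty f ∧ ∀ l i, f i ≤ G l ∨ G (l + 1) ≤ f i := by
  set m := Fintype.card ι
  have hm : 0 < m := Fintype.card_pos
  set e : Fin m ≃ ι := (Fintype.equivFin ι).symm
  set ρ : Fin m ≃ ι := (Tuple.sort (f ∘ e)).trans e
  have hρ : Monotone (f ∘ ρ) := Tuple.monotone_sort (f ∘ e)
  have hrank : ∀ i (k : Fin m), ρ.symm i ≤ k → f i ≤ f (ρ k) := fun i k hk => by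
    simpa using hρ hk
  have hrank' : ∀ i (k : Fin m), k ≤ ρ.symm i → f (ρ k) ≤ f i := fun i k hk => by
    simpa using hρ hk
  set G : ℕ → ℝ := fun l => f (ρ ⟨min l (m - 1), by omega⟩)
  refine ⟨G, fun a b hab => hρ (by simp only [Fin.mk_le_mk]; omega), ?_, ?_, fun l i => ?_⟩
  · exact le_antisymm (le_inf' _ _ fun i _ => hrank' i _ (by simp))
      (inf'_le _ (mem_univ _))
  · exact le_antisymm (le_sup' f (mem_univ _))
      (sup'_le _ _ fun i _ => hrank i _ (by simp only [Fin.le_def]; omega))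
  · rcases le_or_gt (ρ.symm i : ℕ) l with h | h
    · exact .inl (hrank i _ (by simp only [Fin.le_def]; omega))
    · exact .inr (hrank' i _ (by simp only [Fin.le_def]; omega))

theorem sum_sq_increments_le_sum_dissipation [Nonempty ι] (hself : ∀ t i, i ∈ N t i)
    {G : ℕ → ℝ} (hG : Monotone G) {F : Finset ℕ} {τ τ' : ℕ}
    (hF : ∀ l ∈ F, ∃ t, τ ≤ t ∧ t < τ' ∧ ∃ i, ∃ v ∈ N t i, x t v ≤ G l ∧ G (l + 1) ≤ x t i) :
    ∑ l ∈ F, (G (l + 1) - G l) ^ 2 ≤ 2 * ∑ t ∈ Ico τ τ', dissipation N x t := by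
  classical
  choose! time htime htime' node nbr hnbr hnbr_le hnode_ge using hF
  have hmaps : ∀ l ∈ F, (time l, node l) ∈ Ico τ τ' ×ˢ (univ : Finset ι) := fun l hl =>
    mem_product.mpr ⟨mem_Ico.mpr ⟨htime l hl, htime' l hl⟩, mem_univ _⟩
  calc ∑ l ∈ F, (G (l + 1) - G l) ^ 2
      = ∑ p ∈ Ico τ τ' ×ˢ univ, ∑ l ∈ F with (time l, node l) = p, (G (l + 1) - G l) ^ 2 :=
        (sum_fiberwise_of_maps_to hmaps _).symm
    _ ≤ ∑ p ∈ Ico τ τ' ×ˢ univ, 2 * ∑ j ∈ N p.1 p.2, (x p.1 j - x (p.1 + 1) p.2) ^ 2 := by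
        refine sum_le_sum fun ⟨t, a⟩ _ => ?_
        refine hG.sum_sq_increments_le ⟨a, hself t a⟩ (x t) _ fun l hl => ?_
        obtain ⟨hlF, hla⟩ := mem_filter.mp hl
        obtain ⟨rfl, rfl⟩ := Prod.mk.inj hla
        exact ⟨⟨nbr l, hnbr l hlF, hnbr_le l hlF⟩, node l, hself _ _, hnode_ge l hlF⟩
    _ = 2 * ∑ t ∈ Ico τ τ', dissipation N x t := by
        rw [← mul_sum, sum_product]
        rfl

theorem spread_sq_le_sum_dissipation [Nonempty ι]
    (hsym : ∀ t i j, j ∈ N t i ↔ i ∈ N t j) (hself : ∀ t i, i ∈ N t i)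
    (hx : ∀ t i, x (t + 1) i = (∑ j ∈ N t i, x t j) / #(N t i)) {τ τ' : ℕ}
    (hconn : ∀ i j, ReflTransGen (fun a b => ∃ t, τ ≤ t ∧ t < τ' ∧ b ∈ N t a) i j) :
    spread (x τ) ^ 2 ≤ 2 * Fintype.card ι * ∑ t ∈ Ico τ τ', dissipation N x t := by
  classical
  obtain ⟨G, hG, hG₀, hGn, hgap⟩ := exists_levels (x τ)
  set n := Fintype.card ι
  obtain ⟨a, -, ha⟩ := univ.exists_mem_eq_inf' univ_nonempty (x τ)
  obtain ⟨b, -, hb⟩ := univ.exists_mem_eq_sup' univ_nonempty (x τ)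
  have hcross : ∀ l ∈ {l ∈ range n | G l < G (l + 1)}, ∃ t, τ ≤ t ∧ t < τ' ∧
      ∃ i, ∃ v ∈ N t i, x t v ≤ G l ∧ G (l + 1) ≤ x t i := by
    intro l hl
    obtain ⟨hln, hlt⟩ := mem_filter.mp hl
    exact exists_edge_across_gap hsym hself hx hconn hlt (hgap l)
      (by rw [← ha, ← hG₀]; exact hG l.zero_le)
      (by rw [← hb, ← hGn]; exact hG (mem_range.mp hln))
  calc spread (x τ) ^ 2 = (∑ l ∈ range n, (G (l + 1) - G l)) ^ 2 := by
        rw [sum_range_sub, hGn, hG₀, spread]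
    _ ≤ n * ∑ l ∈ range n, (G (l + 1) - G l) ^ 2 := by
        simpa using sq_sum_le_card_mul_sum_sq (s := range n) (f := fun l => G (l + 1) - G l)
    _ = n * ∑ l ∈ range n with G l < G (l + 1), (G (l + 1) - G l) ^ 2 := by
        rw [sum_filter_of_ne fun l _ h => (hG l.le_succ).lt_of_ne fun he => h (by simp [he])]
    _ ≤ n * (2 * ∑ t ∈ Ico τ τ', dissipation N x t) := by
        gcongr
        exact sum_sq_increments_le_sum_dissipation hself hG hcross
    _ = 2 * n * ∑ t ∈ Ico τ τ', dissipation N x t := by ring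

theorem mem_Icc_of_sum_mul_eq [Nonempty ι] (hw : ∀ i, 0 ≤ w i)
    (hW : 0 < ∑ i, w i) {f : ι → ℝ} {c : ℝ} (h : ∑ i, w i * f i = c * ∑ i, w i) :
    c ∈ Set.Icc (univ.inf' univ_nonempty f) (univ.sup' univ_nonempty f) := by
  constructor
  · refine le_of_mul_le_mul_right ?_ hW
    rw [← h, mul_sum]
    exact sum_le_sum fun i _ => by
      rw [mul_comm]
      exact mul_le_mul_of_nonneg_left (inf'_le f (mem_univ i)) (hw i)
  · refine le_of_mul_le_mul_right ?_ hW
    rw [← h, mul_sum]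
    exact sum_le_sum fun i _ => by
      rw [mul_comm _ (w i)]
      exact mul_le_mul_of_nonneg_left (le_sup' f (mem_univ i)) (hw i)

theorem energy_le_card_sq_mul_spread_sq [Nonempty ι]
    (hhi : ∀ i, w i ≤ Fintype.card ι) {f : ι → ℝ} {c : ℝ}
    (hc : c ∈ Set.Icc (univ.inf' univ_nonempty f) (univ.sup' univ_nonempty f)) :
    energy w c f ≤ (Fintype.card ι : ℝ) ^ 2 * spread f ^ 2 := by
  have hdev : ∀ i, (f i - c) ^ 2 ≤ spread f ^ 2 := fun i => by
    have h₁ := inf'_le f (mem_univ i)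
    have h₂ := le_sup' f (mem_univ i)
    exact sq_le_sq' (by rw [spread]; linarith [hc.2]) (by rw [spread]; linarith [hc.1])
  calc energy w c f ≤ ∑ _i : ι, (Fintype.card ι : ℝ) * spread f ^ 2 :=
        sum_le_sum fun i _ => mul_le_mul (hhi i) (hdev i) (sq_nonneg _) (Nat.cast_nonneg _)
    _ = (Fintype.card ι : ℝ) ^ 2 * spread f ^ 2 := by
        rw [sum_const, card_univ, nsmul_eq_mul]
        ring

theorem spread_sq_le_two_mul_energy [Nonempty ι] (hw : ∀ i, 1 ≤ w i)
    (f : ι → ℝ) (c : ℝ) : spread f ^ 2 ≤ 2 * energy w c f :=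
  (sq_sup'_sub_inf'_le univ_nonempty f c).trans <| mul_le_mul_of_nonneg_left
    (sum_le_sum fun i _ => le_mul_of_one_le_left (sq_nonneg _) (hw i)) zero_le_two

theorem energy_le_mul_energy [Nonempty ι]
    (hsym : ∀ t i j, j ∈ N t i ↔ i ∈ N t j) (hself : ∀ t i, i ∈ N t i)
    (hx : ∀ t i, x (t + 1) i = (∑ j ∈ N t i, x t j) / #(N t i))
    (hw : ∀ t j, ∑ i ∈ N t j, w i / #(N t i) = w j) (hlo : ∀ t i, (#(N t i) : ℝ) ≤ w i)
    (hhi : ∀ i, w i ≤ Fintype.card ι) {τ τ' : ℕ} (hττ' : τ ≤ τ')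
    (hconn : ∀ i j, ReflTransGen (fun a b => ∃ t, τ ≤ t ∧ t < τ' ∧ b ∈ N t a) i j) {c : ℝ}
    (hc : c ∈ Set.Icc (univ.inf' univ_nonempty (x τ)) (univ.sup' univ_nonempty (x τ))) :
    energy w c (x τ') ≤ (1 - 1 / (2 * Fintype.card ι ^ 3)) * energy w c (x τ) := by
  set n : ℝ := (Fintype.card ι : ℝ)
  have hn : 1 ≤ n := Nat.one_le_cast.mpr Fintype.card_pos
  have hV := energy_le_card_sq_mul_spread_sq hhi hc
  have hS := (spread_sq_le_sum_dissipation hsym hself hx hconn).trans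
    (mul_le_mul_of_nonneg_left (sum_dissipation_le hsym hself hx hw hlo c hττ') (by positivity))
  have hdecr : energy w c (x τ) ≤ 2 * n ^ 3 * (energy w c (x τ) - energy w c (x τ')) := by
    nlinarith
  calc energy w c (x τ')
      = energy w c (x τ) - 2 * n ^ 3 * (energy w c (x τ) - energy w c (x τ')) / (2 * n ^ 3) := by
        field_simp
        ring
    _ ≤ energy w c (x τ) - energy w c (x τ) / (2 * n ^ 3) := by gcongr
    _ = (1 - 1 / (2 * n ^ 3)) * energy w c (x τ) := by ring

theorem one_sub_one_div_two_mul_pow_three_nonneg {c : ℝ} (hc : 1 ≤ c) :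
    0 ≤ 1 - 1 / (2 * c ^ 3) := by
  have := one_le_pow₀ (n := 3) hc
  rw [sub_nonneg, div_le_one (by positivity)]
  linarith

theorem energy_le_pow_mul_energy [Nonempty ι]
    (hsym : ∀ t i j, j ∈ N t i ↔ i ∈ N t j) (hself : ∀ t i, i ∈ N t i)
    (hx : ∀ t i, x (t + 1) i = (∑ j ∈ N t i, x t j) / #(N t i))
    (hw : ∀ t j, ∑ i ∈ N t j, w i / #(N t i) = w j) (hlo : ∀ t i, (#(N t i) : ℝ) ≤ w i)
    (hhi : ∀ i, w i ≤ Fintype.card ι) {B : ℕ}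
    (hconn : ∀ m : ℕ, ∀ i j, ReflTransGen
      (fun a b => ∃ t, m * B ≤ t ∧ t < (m + 1) * B ∧ b ∈ N t a) i j) {c : ℝ}
    (hc : ∀ t, c ∈ Set.Icc (univ.inf' univ_nonempty (x t)) (univ.sup' univ_nonempty (x t)))
    (m : ℕ) :
    energy w c (x (m * B)) ≤ (1 - 1 / (2 * Fintype.card ι ^ 3)) ^ m * energy w c (x 0) := by
  induction m with
  | zero => simp
  | succ m ih =>
    calc energy w c (x ((m + 1) * B))
        ≤ (1 - 1 / (2 * Fintype.card ι ^ 3)) * energy w c (x (m * B)) :=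
          energy_le_mul_energy hsym hself hx hw hlo hhi (by gcongr; omega) (hconn m) (hc _)
      _ ≤ (1 - 1 / (2 * Fintype.card ι ^ 3)) *
            ((1 - 1 / (2 * Fintype.card ι ^ 3)) ^ m * energy w c (x 0)) :=
          mul_le_mul_of_nonneg_left ih <|
            one_sub_one_div_two_mul_pow_three_nonneg (Nat.one_le_cast.mpr Fintype.card_pos)
      _ = (1 - 1 / (2 * Fintype.card ι ^ 3)) ^ (m + 1) * energy w c (x 0) := by ring

theorem spread_sq_le_pow_mul_spread_sq [Nonempty ι]
    (hsym : ∀ t i j, j ∈ N t i ↔ i ∈ N t j) (hself : ∀ t i, i ∈ N t i)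
    (hx : ∀ t i, x (t + 1) i = (∑ j ∈ N t i, x t j) / #(N t i))
    (hw : ∀ t j, ∑ i ∈ N t j, w i / #(N t i) = w j) (hlo : ∀ t i, (#(N t i) : ℝ) ≤ w i)
    (hhi : ∀ i, w i ≤ Fintype.card ι) {B : ℕ}
    (hconn : ∀ m : ℕ, ∀ i j, ReflTransGen
      (fun a b => ∃ t, m * B ≤ t ∧ t < (m + 1) * B ∧ b ∈ N t a) i j) (k : ℕ) :
    spread (x k) ^ 2 ≤ 2 * Fintype.card ι ^ 2 * (1 - 1 / (2 * Fintype.card ι ^ 3)) ^ (k / B) *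
      spread (x 0) ^ 2 := by
  have hw₁ : ∀ i, 1 ≤ w i := fun i =>
    (Nat.one_le_cast.mpr (card_pos.mpr ⟨i, hself 0 i⟩)).trans (hlo 0 i)
  have hW : 0 < ∑ i, w i := sum_pos (fun i _ => one_pos.trans_le (hw₁ i)) univ_nonempty
  -- the `w`-weighted mean is conserved, so it lies between the extreme values at all times
  set μ := (∑ i, w i * x 0 i) / ∑ i, w i
  have hμ : ∀ t, μ ∈ Set.Icc (univ.inf' univ_nonempty (x t)) (univ.sup' univ_nonempty (x t)) :=
    fun t => mem_Icc_of_sum_mul_eq (fun i => zero_le_one.trans (hw₁ i)) hW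
      (by rw [sum_mul_eq_sum_mul_zero hsym hx hw t, div_mul_cancel₀ _ hW.ne'])
  calc spread (x k) ^ 2 ≤ 2 * energy w μ (x k) := spread_sq_le_two_mul_energy hw₁ _ _
    _ ≤ 2 * energy w μ (x (k / B * B)) := by
        gcongr 2 * ?_
        exact energy_antitone hsym hself hx hw hlo μ (Nat.div_mul_le_self k B)
    _ ≤ 2 * ((1 - 1 / (2 * Fintype.card ι ^ 3)) ^ (k / B) * energy w μ (x 0)) := by
        gcongr 2 * ?_
        exact energy_le_pow_mul_energy hsym hself hx hw hlo hhi hconn hμ (k / B)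
    _ ≤ 2 * ((1 - 1 / (2 * Fintype.card ι ^ 3)) ^ (k / B) *
          (Fintype.card ι ^ 2 * spread (x 0) ^ 2)) := by
        gcongr 2 * (?_ * ?_)
        · exact pow_nonneg
            (one_sub_one_div_two_mul_pow_three_nonneg (Nat.one_le_cast.mpr Fintype.card_pos)) _
        · exact energy_le_card_sq_mul_spread_sq hhi (hμ 0)
    _ = _ := by ring

theorem two_mul_sq_mul_pow_le {c ε : ℝ} (hc : 1 ≤ c) (hε : 0 < ε) {B k : ℕ} (hB : 0 < B)
    (hk : B + 4 * c ^ 3 * B * Real.log (2 * c / ε) ≤ k) :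
    2 * c ^ 2 * (1 - 1 / (2 * c ^ 3)) ^ (k / B) ≤ ε ^ 2 := by
  set L := Real.log (2 * c / ε)
  have hBpos : (0 : ℝ) < B := by exact_mod_cast hB
  have hq : 4 * c ^ 3 * L ≤ (k / B : ℕ) := by
    have h := Nat.sub_one_lt_floor ((k : ℝ) / B)
    rw [Nat.floor_div_eq_div] at h
    have : 4 * c ^ 3 * L ≤ (k : ℝ) / B - 1 := by
      rw [le_sub_iff_add_le, le_div_iff₀ hBpos]
      linarith
    linarith
  calc 2 * c ^ 2 * (1 - 1 / (2 * c ^ 3)) ^ (k / B)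
      ≤ 2 * c ^ 2 * Real.exp (-(1 / (2 * c ^ 3))) ^ (k / B) := by
        gcongr
        · exact one_sub_one_div_two_mul_pow_three_nonneg hc
        · exact Real.one_sub_le_exp_neg _
    _ ≤ 2 * c ^ 2 * Real.exp (-(L + L)) := by
        rw [← Real.exp_nat_mul]
        gcongr
        rw [mul_neg, neg_le_neg_iff, mul_one_div, le_div_iff₀ (by positivity)]
        linarith
    _ = ε ^ 2 / 2 := by
        rw [Real.exp_neg, Real.exp_add, Real.exp_log (by positivity)]
        field_simp
    _ ≤ ε ^ 2 := by linarith [sq_nonneg ε]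

theorem exists_stationary_weight (hsym : ∀ t i j, j ∈ N t i ↔ i ∈ N t j)
    (hself : ∀ t i, i ∈ N t i) {d : ι → ℕ} (hdeg : ∀ t i, #(N t i) = d i ∨ #(N t i) = 1) :
    ∃ w : ι → ℝ, (∀ t j, ∑ i ∈ N t j, w i / #(N t i) = w j) ∧
      (∀ t i, (#(N t i) : ℝ) ≤ w i) ∧ ∀ i, w i ≤ Fintype.card ι := by
  -- clamping only changes `d i` where it is never the degree of `i`
  set w : ι → ℝ := fun i => (max 1 (min (d i) (Fintype.card ι)) : ℕ)
  have hpos : ∀ t i, 1 ≤ #(N t i) := fun t i => card_pos.mpr ⟨i, hself t i⟩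
  have hw_eq : ∀ t i, #(N t i) = d i → w i = #(N t i) := fun t i h => by
    have := card_le_univ (N t i)
    have := hpos t i
    simp only [w]
    congr 1
    omega
  have hsingleton : ∀ t i, #(N t i) = 1 → N t i = {i} := fun t i h =>
    eq_singleton_iff_unique_mem.mpr
      ⟨hself t i, fun j hj => card_le_one.mp h.le j hj i (hself t i)⟩
  refine ⟨w, fun t j => ?_, fun t i => ?_, fun i => ?_⟩
  · by_cases h₁ : #(N t j) = 1
    · rw [hsingleton t j h₁, sum_singleton, h₁, Nat.cast_one, div_one]
    have hterm : ∀ i ∈ N t j, w i / #(N t i) = 1 := fun i hi => by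
      have hi₁ : #(N t i) ≠ 1 := fun h => by
        have hji := (hsym t i j).mpr hi
        rw [hsingleton t i h, mem_singleton] at hji
        exact h₁ (hji ▸ h)
      rw [hw_eq t i ((hdeg t i).resolve_right hi₁), div_self (Nat.cast_pos.mpr (hpos t i)).ne']
    rw [sum_congr rfl hterm, sum_const, nsmul_one, hw_eq t j ((hdeg t j).resolve_right h₁)]
  · rcases hdeg t i with h | h
    · rw [hw_eq t i h]
    · simp only [w, h]
      exact_mod_cast le_max_left _ _
  · simp only [w]
    exact_mod_cast max_le ((hpos 0 i).trans (card_le_univ _)) (min_le_right _ _)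

end EqualNeighbor

open EqualNeighbor

/-- Main theorem: For a `B`-connected sequence of undirected graphs
with self-loops on `n+1` nodes in which each node's degree at every time is either
`d_i` or `1`, if `k ≥ B + 4(n+1)³ B ln(2(n+1)/ε)` then the equal-neighbor iteration
achieves `ε`-consensus: `S(x(k)) ≤ ε S(x(0))`. -/
theorem main_consensus_time
    (n B k : ℕ) (hB : 0 < B)
    (N : ℕ → Fin (n + 1) → Finset (Fin (n + 1))) (d : Fin (n + 1) → ℕ)
    (hsym : ∀ t i j, j ∈ N t i ↔ i ∈ N t j)
    (hself : ∀ t i, i ∈ N t i)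
    (hdeg : ∀ t i, (N t i).card = d i ∨ (N t i).card = 1)
    (hBconn : ∀ m : ℕ, ∀ i j, Relation.ReflTransGen
      (fun a b => ∃ t, m * B ≤ t ∧ t < (m + 1) * B ∧ b ∈ N t a) i j)
    (ε : ℝ) (hε : 0 < ε)
    (hk : (B : ℝ) + 4 * (n + 1 : ℝ) ^ 3 * B * Real.log (2 * (n + 1) / ε) ≤ (k : ℝ))
    (x : ℕ → Fin (n + 1) → ℝ)
    (hx : ∀ t i, x (t + 1) i = (∑ j ∈ N t i, x t j) / ((N t i).card : ℝ)) :
    Finset.univ.sup' Finset.univ_nonempty (x k) -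
        Finset.univ.inf' Finset.univ_nonempty (x k) ≤
      ε * (Finset.univ.sup' Finset.univ_nonempty (x 0) -
        Finset.univ.inf' Finset.univ_nonempty (x 0)) := by
  obtain ⟨w, hw, hlo, hhi⟩ := exists_stationary_weight hsym hself hdeg
  have hdecay := spread_sq_le_pow_mul_spread_sq hsym hself hx hw hlo hhi hBconn k
  have hrate := two_mul_sq_mul_pow_le (c := n + 1) (by simp) hε hB hk
  rw [Fintype.card_fin, Nat.cast_add_one] at hdecay
  have hsq : spread (x k) ^ 2 ≤ (ε * spread (x 0)) ^ 2 :=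
    calc spread (x k) ^ 2
        ≤ 2 * (n + 1 : ℝ) ^ 2 * (1 - 1 / (2 * (n + 1 : ℝ) ^ 3)) ^ (k / B) * spread (x 0) ^ 2 :=
          hdecay
      _ ≤ ε ^ 2 * spread (x 0) ^ 2 := by gcongr
      _ = (ε * spread (x 0)) ^ 2 := by ring
  exact (pow_le_pow_iff_left₀ (spread_nonneg _) (mul_nonneg hε.le (spread_nonneg _))
    two_ne_zero).mp hsq
end

section
/- Consider a random walk on the time-varying graph sequence of Figure 1 (two stars of size n/2 connected by a single edge between their centers, with centers rotating so that after each step the previous center becomes a leaf of a newly emerged star, every node having a self-loop). Let T be the first time the walk started at the emerged left node crosses to the right half. Then E[T] ≥ 2^{(n/2)−1}. Consequently, if the reversed graph sequence of length t results in (1/4)-consensus, then t ≥ 2^{n/2}/8. -/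
/-!
Until it crosses, the walk lives on the left half and moves by the substochastic matrices
`figQ m s`. Measured relative to the rotating centre (a node at relative position `j`
becomes the centre after `j` steps) these dynamics are time-homogeneous, and the expected
crossing time from relative position `j` solves an explicit linear system; its solution is
`h j = K - 2 ^ (m + 2 - j)` with `K = (m + 1) 2 ^ (m + 2) + m + 5`. Telescoping
`h = 1 + Q h` along the walk gives `E[T] = h (m + 1) = (m + 1) 2 ^ (m + 2) + m + 3` exactly,
and `h (m + 1) ≤ t + h (m + 1) P(T > t)` for every `t`. Applied to the indicator of the right
half, `(1/4)`-consensus forces `P(T > t) ≤ 5/8`, since the two copies of the emerged node stay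
on their own sides with the same probability; hence `t ≥ 3/8 h (m + 1)`.
-/

/-- Vertices of the Figure-1 graphs: left half `Sum.inl`, right half `Sum.inr`,
each half of size `m + 2` (so `n = 2(m+2)` nodes in total, `n/2 = m + 2`). -/
abbrev FigVertex (m : ℕ) := Fin (m + 2) ⊕ Fin (m + 2)

/-- Neighborhoods (including self-loops) of the Figure-1 graph at time `t`:
each half is a star whose center at time `t` is node `t mod (m+2)` (the centers
rotate by one each step, so the previous center becomes a leaf of the newly
emerged star), together with an edge joining the two centers, and a self-loop at
every node. -/
def figNbhd (m t : ℕ) : FigVertex m → Finset (FigVertex m) := fun v =>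
  let c : Fin (m + 2) := (Fin.ofNat (m + 2) t)
  match v with
  | Sum.inl a =>
      if a = c then (Finset.univ.image Sum.inl) ∪ {Sum.inr c}
      else {Sum.inl a, Sum.inl c}
  | Sum.inr a =>
      if a = c then (Finset.univ.image Sum.inr) ∪ {Sum.inl c}
      else {Sum.inr a, Sum.inr c}

/-- Transition matrix of the random walk on the Figure-1 graph at time `t`:
jump to a uniformly chosen neighbor (including staying put via the self-loop). -/
noncomputable def figA (m t : ℕ) : Matrix (FigVertex m) (FigVertex m) ℝ :=
  fun u v => if v ∈ figNbhd m t u then ((figNbhd m t u).card : ℝ)⁻¹ else 0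

/-- Left-half substochastic restriction of the walk (transitions staying in the
left half); its `s`-step products give the probability that the walk has not yet
crossed to the right half. -/
noncomputable def figQ (m t : ℕ) : Matrix (Fin (m + 2)) (Fin (m + 2)) ℝ :=
  fun a b => figA m t (Sum.inl a) (Sum.inl b)

open Finset Matrix

theorem List.prod_map_range_succ {M : Type*} [Monoid M] (f : ℕ → M) (N : ℕ) :
    ((List.range (N + 1)).map f).prod = ((List.range N).map f).prod * f N := by
  simp [List.range_succ]

namespace Matrix

variable {n R : Type*} [Fintype n] [DecidableEq n] [Semiring R]

theorem sum_prod_mulVec_add_prod_mulVec_eq (Q : ℕ → Matrix n n R) {c h : ℕ → n → R}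
    (hh : ∀ s, h s = c s + Q s *ᵥ h (s + 1)) (N : ℕ) :
    ∑ s ∈ range N, ((List.range s).map Q).prod *ᵥ c s +
      ((List.range N).map Q).prod *ᵥ h N = h 0 := by
  induction N with
  | zero => simp
  | succ N ih =>
    rw [sum_range_succ, List.prod_map_range_succ, ← mulVec_mulVec, add_assoc, ← mulVec_add,
      ← hh, ih]

variable [PartialOrder R] [IsOrderedRing R]

theorem list_prod_apply_nonneg {l : List (Matrix n n R)} (hl : ∀ A ∈ l, ∀ i j, 0 ≤ A i j)
    (i j : n) : 0 ≤ l.prod i j := by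
  induction l generalizing i with
  | nil => rw [List.prod_nil, one_apply]; split_ifs <;> simp
  | cons A l ih =>
    rw [List.prod_cons, mul_apply]
    exact sum_nonneg fun k _ =>
      mul_nonneg (hl A List.mem_cons_self i k) (ih (fun B hB => hl B (List.mem_cons_of_mem _ hB)) k)

theorem list_prod_toBlocks₁₁_apply_le {α β : Type*} [Fintype α] [Fintype β] [DecidableEq α]
    [DecidableEq β] {l : List (Matrix (α ⊕ β) (α ⊕ β) R)} (hl : ∀ A ∈ l, ∀ i j, 0 ≤ A i j)
    (a b : α) : (l.map toBlocks₁₁).prod a b ≤ l.prod.toBlocks₁₁ a b := by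
  induction l generalizing a with
  | nil => simp [toBlocks₁₁, one_apply]
  | cons A l ih =>
    have hA := hl A List.mem_cons_self
    have hl' : ∀ B ∈ l, ∀ i j, 0 ≤ B i j := fun B hB => hl B (List.mem_cons_of_mem _ hB)
    simp only [List.map_cons, List.prod_cons, toBlocks₁₁, of_apply, mul_apply,
      Fintype.sum_sum_type] at ih ⊢
    calc ∑ c, A (.inl a) (.inl c) * (l.map toBlocks₁₁).prod c b
        ≤ ∑ c, A (.inl a) (.inl c) * l.prod (.inl c) (.inl b) :=
          sum_le_sum fun c _ => mul_le_mul_of_nonneg_left (ih hl' c) (hA _ _)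
      _ ≤ _ := le_add_of_nonneg_right <| sum_nonneg fun c _ =>
          mul_nonneg (hA _ _) (list_prod_apply_nonneg hl' _ _)

end Matrix

section Spread

variable {ι : Type*} [Fintype ι] [Nonempty ι]

/-- The spread `S(x) = max x - min x` of the paper. -/
noncomputable def spread (x : ι → ℝ) : ℝ :=
  univ.sup' univ_nonempty x - univ.inf' univ_nonempty x

theorem sub_le_spread (x : ι → ℝ) (i j : ι) : x i - x j ≤ spread x :=
  sub_le_sub (le_sup' x (mem_univ i)) (inf'_le x (mem_univ j))

theorem spread_le_of_forall_mem_Icc {x : ι → ℝ} {a b : ℝ} (hx : ∀ i, x i ∈ Set.Icc a b) :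
    spread x ≤ b - a :=
  sub_le_sub (sup'_le _ _ fun i _ => (hx i).2) (le_inf' _ _ fun i _ => (hx i).1)

end Spread

open Fin.CommRing

namespace Fin

theorem val_sub_natCast_succ_add_one {n s : ℕ} {a : Fin (n + 1)} (ha : a ≠ s) :
    (a - ((s + 1 : ℕ) : Fin (n + 1))).val + 1 = (a - s).val := by
  have hne : a - s ≠ 0 := sub_ne_zero.mpr ha
  rw [show a - ((s + 1 : ℕ) : Fin (n + 1)) = (a - s) - 1 by push_cast; ring,
    val_sub_one_of_ne_zero hne]
  have := pos_iff_ne_zero.mpr hne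
  omega

theorem val_natCast_sub_natCast_succ (n s : ℕ) :
    ((s : Fin (n + 1)) - ((s + 1 : ℕ) : Fin (n + 1))).val = n := by
  rw [show (s : Fin (n + 1)) - ((s + 1 : ℕ) : Fin (n + 1)) = -1 by push_cast; ring, coe_neg_one]

end Fin

theorem figQ_apply (m t : ℕ) (a b : Fin (m + 2)) :
    figQ m t a b =
      if a = t then ((m : ℝ) + 3)⁻¹ else if b = a ∨ b = t then 2⁻¹ else 0 := by
  unfold figQ figA figNbhd
  simp only [Fin.ofNat_eq_cast]
  by_cases h : a = t
  · rw [if_pos h, if_pos h, if_pos (by simp), card_union_of_disjoint (by simp),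
      card_image_of_injective _ Sum.inl_injective]
    simp only [card_univ, Fintype.card_fin, card_singleton]
    push_cast
    ring_nf
  · have hc : ({Sum.inl a, Sum.inl (t : Fin (m + 2))} : Finset (FigVertex m)).card = 2 := by
      rw [card_insert_of_notMem (by simp [h]), card_singleton]
    simp only [h, if_false, hc]
    by_cases hb : b = a ∨ b = t
    · rw [if_pos (by simp [hb]), if_pos hb]
      norm_num
    · rw [if_neg (by simpa using hb), if_neg hb]

/-- Expected number of steps before crossing, from a left node that becomes the centre in
`j` steps: the solution of `h j = 1 + (h (j - 1) + h (m + 1)) / 2` for `0 < j` and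
`h 0 = 1 + (∑ i, h i) / (m + 3)`. -/
noncomputable def crossingPotential (m j : ℕ) : ℝ :=
  (m + 1) * 2 ^ (m + 2) + m + 5 - 2 ^ (m + 2) * 2⁻¹ ^ j

theorem sum_range_crossingPotential (m : ℕ) :
    ∑ j ∈ range (m + 2), crossingPotential m j =
      (m + 2) * ((m + 1) * 2 ^ (m + 2) + m + 5) - (2 ^ (m + 3) - 2) := by
  simp only [crossingPotential, sum_sub_distrib, ← mul_sum,
    geom_sum_eq (by norm_num : (2⁻¹ : ℝ) ≠ 1)]
  simp only [sum_const, card_range, nsmul_eq_mul, Nat.cast_add, Nat.cast_ofNat, inv_pow]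
  field_simp
  ring

/-- Node `a` is the centre at time `s + (a - s).val`. -/
noncomputable def crossingPotentialAt (m s : ℕ) (a : Fin (m + 2)) : ℝ :=
  crossingPotential m (a - s).val

theorem crossingPotentialAt_eq_one_add_figQ_mulVec (m s : ℕ) :
    crossingPotentialAt m s = 1 + figQ m s *ᵥ crossingPotentialAt m (s + 1) := by
  funext a
  simp only [crossingPotentialAt, Pi.add_apply, Pi.one_apply, mulVec, dotProduct, figQ_apply]
  by_cases ha : a = s
  · have hsum : ∑ b : Fin (m + 2), crossingPotential m (b - ((s + 1 : ℕ) : Fin (m + 2))).val =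
        ∑ j ∈ range (m + 2), crossingPotential m j := by
      rw [← Fin.sum_univ_eq_sum_range]
      exact Fintype.sum_equiv (Equiv.subRight _) _ _ fun _ => rfl
    simp only [ha, if_true, sub_self, Fin.val_zero, ← mul_sum, hsum, sum_range_crossingPotential]
    unfold crossingPotential
    field_simp
    ring
  · have hpair : ∀ b : Fin (m + 2), (if b = a ∨ b = s then (2⁻¹ : ℝ) else 0) =
        if b ∈ ({a, (s : Fin (m + 2))} : Finset _) then 2⁻¹ else 0 := fun b => by simp
    simp only [ha, if_false, hpair, ite_mul, zero_mul, sum_ite_mem, univ_inter,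
      sum_pair ha, Fin.val_natCast_sub_natCast_succ]
    obtain ⟨j, hj⟩ : ∃ j, (a - s).val = j + 1 := ⟨_, (Fin.val_sub_natCast_succ_add_one ha).symm⟩
    rw [hj, show (a - ((s + 1 : ℕ) : Fin (m + 2))).val = j by
      have := Fin.val_sub_natCast_succ_add_one ha; omega]
    simp only [crossingPotential, inv_pow]
    field_simp
    ring

theorem crossingPotential_nonneg (m j : ℕ) : 0 ≤ crossingPotential m j := by
  have : (2 : ℝ) ^ (m + 2) * 2⁻¹ ^ j ≤ 2 ^ (m + 2) :=
    mul_le_of_le_one_right (by positivity) (pow_le_one₀ (by norm_num) (by norm_num))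
  unfold crossingPotential
  nlinarith [(by positivity : (0 : ℝ) ≤ m * 2 ^ (m + 2))]

theorem crossingPotential_le_of_le {m j : ℕ} (hj : j ≤ m + 1) :
    crossingPotential m j ≤ crossingPotential m (m + 1) := by
  have : (2⁻¹ : ℝ) ^ (m + 1) ≤ 2⁻¹ ^ j := pow_le_pow_of_le_one (by norm_num) (by norm_num) hj
  unfold crossingPotential
  nlinarith [(by positivity : (0 : ℝ) < 2 ^ (m + 2))]

theorem crossingPotential_last (m : ℕ) :
    crossingPotential m (m + 1) = (m + 1) * 2 ^ (m + 2) + m + 3 := by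
  simp only [crossingPotential, inv_pow]
  field_simp
  ring

theorem figA_mem_rowStochastic (m t : ℕ) : figA m t ∈ rowStochastic ℝ (FigVertex m) := by
  refine mem_rowStochastic_iff_sum.mpr ⟨fun u v => by unfold figA; positivity, fun u => ?_⟩
  have hself : u ∈ figNbhd m t u := by
    rcases u with a | a <;> by_cases h : a = t <;> simp [figNbhd, h]
  simp only [figA, sum_ite_mem, univ_inter, sum_const, nsmul_eq_mul]
  exact mul_inv_cancel₀ (Nat.cast_ne_zero.mpr (card_pos.mpr ⟨u, hself⟩).ne')

theorem figQ_apply_nonneg (m t : ℕ) (a b : Fin (m + 2)) : 0 ≤ figQ m t a b :=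
  nonneg_of_mem_rowStochastic (figA_mem_rowStochastic m t)

theorem figNbhd_swap (m t : ℕ) (u : FigVertex m) :
    figNbhd m t u.swap = (figNbhd m t u).image Sum.swap := by
  rcases u with a | a <;> by_cases h : a = t <;>
    simp [figNbhd, h, image_image, image_insert, Function.comp_def]

theorem figA_swap (m t : ℕ) (u v : FigVertex m) : figA m t u.swap v.swap = figA m t u v := by
  have hinj : Function.Injective (@Sum.swap (Fin (m + 2)) (Fin (m + 2))) :=
    Sum.swap_leftInverse.injective
  simp only [figA, figNbhd_swap, card_image_of_injective _ hinj, hinj.mem_finset_image]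

theorem list_prod_figA_swap (m N : ℕ) (u v : FigVertex m) :
    ((List.range N).map (figA m)).prod u.swap v.swap = ((List.range N).map (figA m)).prod u v := by
  have hinv : reindexAlgEquiv ℝ ℝ (Equiv.sumComm _ _) (((List.range N).map (figA m)).prod) =
      ((List.range N).map (figA m)).prod := by
    rw [map_list_prod, List.map_map]
    congr 2
    funext t
    ext u v
    exact figA_swap m t u v
  exact congrFun₂ hinv u v

/-- The probability that the walk started at the emerged left node has not crossed to the
right half within its first `s` steps. -/
noncomputable def figSurvival (m s : ℕ) : ℝ :=
  ∑ b, ((List.range s).map (figQ m)).prod (Fin.last (m + 1)) b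

theorem figSurvival_le_sum_inl (m s : ℕ) :
    figSurvival m s ≤
      ∑ b, ((List.range s).map (figA m)).prod (.inl (Fin.last (m + 1))) (.inl b) := by
  have hblocks : (List.range s).map (figQ m) = ((List.range s).map (figA m)).map toBlocks₁₁ := by
    rw [List.map_map]
    rfl
  rw [figSurvival, hblocks]
  refine sum_le_sum fun b _ => list_prod_toBlocks₁₁_apply_le ?_ _ _
  simp only [List.mem_map]
  rintro _ ⟨t, -, rfl⟩
  exact fun _ _ => nonneg_of_mem_rowStochastic (figA_mem_rowStochastic m t)

theorem figSurvival_le_one (m s : ℕ) : figSurvival m s ≤ 1 := by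
  have hP := Submonoid.list_prod_mem (rowStochastic ℝ (FigVertex m))
    (l := (List.range s).map (figA m)) (by simp [figA_mem_rowStochastic])
  have hrow := sum_row_of_mem_rowStochastic hP (.inl (Fin.last (m + 1)))
  rw [Fintype.sum_sum_type] at hrow
  have : 0 ≤ ∑ b, ((List.range s).map (figA m)).prod (.inl (Fin.last (m + 1))) (.inr b) :=
    sum_nonneg fun b _ => nonneg_of_mem_rowStochastic hP
  linarith [figSurvival_le_sum_inl m s]

theorem list_prod_figQ_apply_nonneg (m s : ℕ) (a b : Fin (m + 2)) :
    0 ≤ ((List.range s).map (figQ m)).prod a b := by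
  refine list_prod_apply_nonneg ?_ a b
  simp only [List.mem_map]
  rintro _ ⟨t, -, rfl⟩
  exact figQ_apply_nonneg m t

theorem figSurvival_nonneg (m s : ℕ) : 0 ≤ figSurvival m s :=
  sum_nonneg fun b _ => list_prod_figQ_apply_nonneg m s _ b

/-- `E[T - N; T > N]`. -/
noncomputable def crossingRemainder (m N : ℕ) : ℝ :=
  (((List.range N).map (figQ m)).prod *ᵥ crossingPotentialAt m N) (Fin.last (m + 1))

theorem sum_figSurvival_add_crossingRemainder (m N : ℕ) :
    ∑ s ∈ range N, figSurvival m s + crossingRemainder m N = crossingPotential m (m + 1) := by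
  have h := congrFun (sum_prod_mulVec_add_prod_mulVec_eq (figQ m) (c := fun _ => 1)
    (crossingPotentialAt_eq_one_add_figQ_mulVec m) N) (Fin.last (m + 1))
  simpa [figSurvival, crossingRemainder, crossingPotentialAt, mulVec, dotProduct] using h

theorem crossingRemainder_nonneg (m N : ℕ) : 0 ≤ crossingRemainder m N := by
  unfold crossingRemainder mulVec dotProduct crossingPotentialAt
  exact sum_nonneg fun b _ => mul_nonneg (list_prod_figQ_apply_nonneg m N _ b)
    (crossingPotential_nonneg m _)

theorem crossingRemainder_le (m N : ℕ) :
    crossingRemainder m N ≤ crossingPotential m (m + 1) * figSurvival m N := by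
  unfold crossingRemainder mulVec dotProduct crossingPotentialAt
  rw [figSurvival, mul_sum]
  refine sum_le_sum fun b _ => ?_
  rw [mul_comm (crossingPotential m _)]
  exact mul_le_mul_of_nonneg_left (crossingPotential_le_of_le (Fin.is_le _))
    (list_prod_figQ_apply_nonneg m N _ b)

theorem hasSum_figSurvival (m : ℕ) : HasSum (figSurvival m) (crossingPotential m (m + 1)) := by
  have hpartial := sum_figSurvival_add_crossingRemainder m
  have hsummable : Summable (figSurvival m) :=
    summable_of_sum_range_le (figSurvival_nonneg m) fun N => by
      linarith [hpartial N, crossingRemainder_nonneg m N]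
  have hremainder : Filter.Tendsto (crossingRemainder m) Filter.atTop (nhds 0) := by
    have := (hsummable.tendsto_atTop_zero).const_mul (crossingPotential m (m + 1))
    rw [mul_zero] at this
    exact squeeze_zero (crossingRemainder_nonneg m) (crossingRemainder_le m) this
  rw [hasSum_iff_tendsto_nat_of_nonneg (figSurvival_nonneg m)]
  convert (tendsto_const_nhds (x := crossingPotential m (m + 1))).sub hremainder using 1
  · funext N
    linarith [hpartial N]
  · simp

theorem figSurvival_le_of_consensus {m t : ℕ}
    (hcons : ∀ x : FigVertex m → ℝ,
      spread (((List.range t).map (figA m)).prod *ᵥ x) ≤ 1 / 4 * spread x) :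
    figSurvival m t ≤ 5 / 8 := by
  set P := ((List.range t).map (figA m)).prod
  set L := ∑ b, P (.inl (Fin.last (m + 1))) (.inl b)
  let x : FigVertex m → ℝ := Sum.elim 0 1
  have hPx : ∀ u, (P *ᵥ x) u = ∑ b, P u (.inr b) := fun u => by
    simp [x, mulVec, dotProduct, Fintype.sum_sum_type]
  have hP : P ∈ rowStochastic ℝ (FigVertex m) :=
    Submonoid.list_prod_mem _ (by simp [figA_mem_rowStochastic])
  have hleft : (P *ᵥ x) (.inl (Fin.last (m + 1))) = 1 - L := by
    have hrow := sum_row_of_mem_rowStochastic hP (.inl (Fin.last (m + 1)))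
    rw [Fintype.sum_sum_type] at hrow
    rw [hPx]
    linarith
  have hright : (P *ᵥ x) (.inr (Fin.last (m + 1))) = L := by
    rw [hPx]
    exact sum_congr rfl fun b _ => list_prod_figA_swap m t (.inl _) (.inl b)
  have hx : spread x ≤ 1 - 0 := spread_le_of_forall_mem_Icc fun u => by
    rcases u with a | a <;> simp [x]
  have hspread := sub_le_spread (P *ᵥ x) (.inr (Fin.last (m + 1))) (.inl (Fin.last (m + 1)))
  linarith [hcons x, figSurvival_le_sum_inl m t]

theorem crossingPotential_le_of_consensus {m t : ℕ}
    (hcons : ∀ x : FigVertex m → ℝ,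
      spread (((List.range t).map (figA m)).prod *ᵥ x) ≤ 1 / 4 * spread x) :
    3 / 8 * crossingPotential m (m + 1) ≤ t := by
  have hsum : ∑ s ∈ range t, figSurvival m s ≤ t := by
    simpa using sum_le_sum fun s (_ : s ∈ range t) => figSurvival_le_one m s
  have hrem := crossingRemainder_le m t
  have hpos := crossingPotential_nonneg m (m + 1)
  nlinarith [sum_figSurvival_add_crossingRemainder m t, figSurvival_le_of_consensus hcons]

theorem figure_one_exponential_lower_bound_general (m t : ℕ) :
    ((2 : ℝ) ^ (m + 1) ≤
      ∑' s : ℕ, ∑ b, (((List.range s).map (figQ m)).prod (Fin.last (m + 1)) b)) ∧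
    ((∀ x : FigVertex m → ℝ,
        Finset.univ.sup' Finset.univ_nonempty
            ((((List.range t).map (figA m)).prod).mulVec x) -
          Finset.univ.inf' Finset.univ_nonempty
            ((((List.range t).map (figA m)).prod).mulVec x) ≤
        (1 / 4 : ℝ) * (Finset.univ.sup' Finset.univ_nonempty x -
          Finset.univ.inf' Finset.univ_nonempty x)) →
      (2 : ℝ) ^ (m + 2) / 8 ≤ (t : ℝ)) := by
  have hlarge : (2 : ℝ) ^ (m + 2) ≤ crossingPotential m (m + 1) := by
    rw [crossingPotential_last]
    nlinarith [(by positivity : (0 : ℝ) ≤ m * 2 ^ (m + 2))]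
  refine ⟨?_, fun hcons => ?_⟩
  · change _ ≤ ∑' s, figSurvival m s
    rw [(hasSum_figSurvival m).tsum_eq]
    rw [pow_succ] at hlarge
    linarith [pow_pos (two_pos : (0 : ℝ) < 2) (m + 1)]
  · linarith [crossingPotential_le_of_consensus hcons]

/-- For the random walk on the Figure-1 time-varying graph sequence,
started at the emerged left node (node `m+1`, the center of the left star at time
`-1`), the expected crossing time `E[T] = Σ_s P(T > s)` to the right half is at
least `2^{(n/2)-1} = 2^{m+1}`.  Consequently, if the reversed graph sequence of
length `t = k·(n/2)` results in `(1/4)`-consensus — i.e. the forward product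
`P = A(0)A(1)⋯A(t-1)` satisfies `S(Px) ≤ (1/4)S(x)` for all `x` — then
`t ≥ 2^{n/2}/8 = 2^{m+2}/8`. -/
theorem figure_one_exponential_lower_bound (m t k : ℕ) (ht : t = k * (m + 2)) :
    ((2 : ℝ) ^ (m + 1) ≤
      ∑' s : ℕ, ∑ b, (((List.range s).map (figQ m)).prod (Fin.last (m + 1)) b)) ∧
    ((∀ x : FigVertex m → ℝ,
        Finset.univ.sup' Finset.univ_nonempty
            ((((List.range t).map (figA m)).prod).mulVec x) -
          Finset.univ.inf' Finset.univ_nonempty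
            ((((List.range t).map (figA m)).prod).mulVec x) ≤
        (1 / 4 : ℝ) * (Finset.univ.sup' Finset.univ_nonempty x -
          Finset.univ.inf' Finset.univ_nonempty x)) →
      (2 : ℝ) ^ (m + 2) / 8 ≤ (t : ℝ)) :=
  figure_one_exponential_lower_bound_general m t
end
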